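/- arXiv:1104.1227 — 9 statements merged into one kernel-verified Lean document; each statement's English description precedes it below -/
import Mathlib

section
/- For a single user (N=1) with SINR payoff γ(p_0,p) = h_{11} p / (h_{10} p_0 + n), under the first-order intervention rule f(p) = min{α|p - p*|, P_0}, the target power p* ∈ (0,P_1] is a Nash equilibrium (i.e., p* maximizes γ(f(p),p) over p ∈ [0,P_1]) if and only if α ≥ n/(p* h_{10}) and P_0 ≥ (P_1 - p*) n / (p* h_{10}), provided p* < P_1. -/
/-!
At `p*` the intervention is silent, so the payoff is `h₁₁ p*/n`. Lower powers only lose signal,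
and a deviation to `p* + t` does not pay iff `n t ≤ p* h₁₀ min (α t, P₀)`. Since the minimum is
at most both `α t` and `P₀`, this inequality at the largest deviation `t = P₁ - p*` already
forces both conditions; conversely, each condition settles one branch of the minimum.
-/

theorem forall_mul_le_mul_min_iff {n c α P T : ℝ} (hn : 0 ≤ n) (hc : 0 ≤ c) (hT : 0 < T) :
    (∀ t, 0 < t → t ≤ T → n * t ≤ c * min (α * t) P) ↔ n ≤ c * α ∧ n * T ≤ c * P := by
  constructor
  · intro h
    have hT' := h T hT le_rfl
    refine ⟨le_of_mul_le_mul_right ?_ hT, ?_⟩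
    · calc n * T ≤ c * min (α * T) P := hT'
        _ ≤ c * (α * T) := by gcongr; exact min_le_left _ _
        _ = c * α * T := by ring
    · calc n * T ≤ c * min (α * T) P := hT'
        _ ≤ c * P := by gcongr; exact min_le_right _ _
  · rintro ⟨hα, hP⟩ t ht htT
    rcases min_choice (α * t) P with hmin | hmin <;> rw [hmin]
    · nlinarith
    · nlinarith

theorem mul_div_le_mul_div_add_iff {a n d p q : ℝ} (ha : 0 < a) (hn : 0 < n) (hd : 0 ≤ d) :
    a * q / (d + n) ≤ a * p / n ↔ n * (q - p) ≤ p * d := by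
  rw [div_le_div_iff₀ (by positivity) hn, mul_assoc, mul_assoc, mul_le_mul_iff_right₀ ha]
  constructor <;> intro h <;> linarith

theorem forall_sinr_le_target_iff {h11 h10 n P0 P1 pstar α : ℝ} (hh11 : 0 < h11)
    (hh10 : 0 ≤ h10) (hn : 0 < n) (hP0 : 0 ≤ P0) (hα : 0 ≤ α) (hp : 0 ≤ pstar) :
    (∀ q, 0 ≤ q → q ≤ P1 → h11 * q / (h10 * min (α * |q - pstar|) P0 + n) ≤ h11 * pstar / n) ↔
      ∀ t, 0 < t → t ≤ P1 - pstar → n * t ≤ pstar * h10 * min (α * t) P0 := by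
  have hf (x : ℝ) : 0 ≤ h10 * min (α * |x|) P0 :=
    mul_nonneg hh10 (le_min (mul_nonneg hα (abs_nonneg x)) hP0)
  have hpayoff (q : ℝ) : h11 * q / (h10 * min (α * |q - pstar|) P0 + n) ≤ h11 * pstar / n ↔
      n * (q - pstar) ≤ pstar * (h10 * min (α * |q - pstar|) P0) :=
    mul_div_le_mul_div_add_iff hh11 hn (hf _)
  constructor
  · intro h t ht htT
    have := (hpayoff (pstar + t)).1 (h _ (by linarith) (by linarith))
    rwa [add_sub_cancel_left, abs_of_pos ht, ← mul_assoc] at this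
  · intro h q _ hq
    rw [hpayoff]
    rcases le_or_gt q pstar with hle | hlt
    · nlinarith [hf (q - pstar)]
    · have := h (q - pstar) (by linarith) (by linarith)
      rwa [abs_of_pos (sub_pos.2 hlt), ← mul_assoc]

theorem stmt1_general (h11 h10 n P1 P0 pstar α : ℝ)
    (hh11 : 0 < h11) (hh10 : 0 < h10) (hn : 0 < n) (hP0 : 0 < P0)
    (hα : 0 ≤ α) (hp1 : 0 < pstar) (hp2 : pstar < P1) :
    (∀ q, 0 ≤ q → q ≤ P1 →
        h11 * q / (h10 * min (α * |q - pstar|) P0 + n) ≤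
        h11 * pstar / (h10 * min (α * |pstar - pstar|) P0 + n))
      ↔ (n / (pstar * h10) ≤ α ∧ (P1 - pstar) * n / (pstar * h10) ≤ P0) := by
  have hc : 0 < pstar * h10 := mul_pos hp1 hh10
  simp only [sub_self, abs_zero, mul_zero, min_eq_left hP0.le, zero_add]
  rw [forall_sinr_le_target_iff hh11 hh10.le hn hP0.le hα hp1.le,
    forall_mul_le_mul_min_iff hn.le hc.le (sub_pos.2 hp2), div_le_iff₀ hc, div_le_iff₀ hc,
    mul_comm α, mul_comm P0, mul_comm (P1 - pstar)]

/-- Single-user version of Theorem 1: under the first-order intervention rule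
`f(p) = min {α |p - p*|, P₀}`, the target `p* ∈ (0, P₁)` is a Nash equilibrium
(maximizes the user's SINR) iff `α ≥ n/(p* h₁₀)` and `P₀ ≥ (P₁ - p*) n/(p* h₁₀)`. -/
theorem stmt1 (h11 h10 n P1 P0 pstar α : ℝ)
    (hh11 : 0 < h11) (hh10 : 0 < h10) (hn : 0 < n) (hP1 : 0 < P1) (hP0 : 0 < P0)
    (hα : 0 ≤ α) (hp1 : 0 < pstar) (hp2 : pstar < P1) :
    (∀ q, 0 ≤ q → q ≤ P1 →
        h11 * q / (h10 * min (α * |q - pstar|) P0 + n) ≤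
        h11 * pstar / (h10 * min (α * |pstar - pstar|) P0 + n))
      ↔ (n / (pstar * h10) ≤ α ∧ (P1 - pstar) * n / (pstar * h10) ≤ P0) :=
  stmt1_general h11 h10 n P1 P0 pstar α hh11 hh10 hn hP0 hα hp1 hp2
end

section
/- (Theorem 1, 'if' direction) Let p* ∈ ∏_i (0,P_i] be a target power profile and consider the first-order intervention rule f(p) = [Σ_i α_i |p_i - p_i*|]_0^{P_0} (truncation to [0,P_0]). If for every user i with p_i* < P_i one has α_i ≥ (Σ_{j≠i} h_ij p_j* + n_i)/(p_i* h_{i0}) and P_0 ≥ (P_i - p_i*)(Σ_{j≠i} h_ij p_j* + n_i)/(p_i* h_{i0}), and α_i = 0 is allowed otherwise, then p* is a Nash equilibrium of the game where user i's payoff is γ_i(f(p),p) = h_ii p_i / (h_{i0} f(p) + Σ_{j≠i} h_ij p_j + n_i). -/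
open Finset

/-
A unilateral deviation `q` of user `i` from `p*` leaves its interference-plus-noise
`I = ∑_{j≠i} h_ij p_j* + n_i` unchanged and triggers the intervention
`F = min (α_i |q - p_i*|) P₀`, so it pays off only if `(q - p_i*) I > p_i* h_i0 F`.
Lowering the power never pays, and raising it to `q ≤ P_i` is deterred by the rate
`α_i` while `α_i (q - p_i*) ≤ P₀`, and by the capability `P₀` beyond that.
-/

/-- First-order intervention rule based on individual transmit powers:
`f(p) = [∑ i, α_i |p_i - p_i*|]₀^{P₀}` (the sum is nonnegative, so the lower
truncation is inactive). -/
noncomputable def intv {N : ℕ} (α pstar : Fin N → ℝ) (P0 : ℝ) (p : Fin N → ℝ) : ℝ :=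
  min (∑ i, α i * |p i - pstar i|) P0

/-- SINR of user `i` under the intervention rule: `γ_i(f(p), p) =
h_ii p_i / (h_i0 f(p) + ∑_{j≠i} h_ij p_j + n_i)`. -/
noncomputable def sinr {N : ℕ} (h : Fin N → Fin N → ℝ) (h0 n α pstar : Fin N → ℝ)
    (P0 : ℝ) (i : Fin N) (p : Fin N → ℝ) : ℝ :=
  h i i * p i / (h0 i * intv α pstar P0 p + ∑ j ∈ univ.erase i, h i j * p j + n i)

/-- `p` is a Nash equilibrium: no user can improve its payoff by a unilateral
deviation within `[0, Pmax i]`. -/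
def isNE {N : ℕ} (Pmax : Fin N → ℝ) (payoff : Fin N → (Fin N → ℝ) → ℝ)
    (p : Fin N → ℝ) : Prop :=
  ∀ i, ∀ q, 0 ≤ q → q ≤ Pmax i →
    payoff i (Function.update p i q) ≤ payoff i p

theorem intv_self {N : ℕ} (α pstar : Fin N → ℝ) {P0 : ℝ} (hP0 : 0 ≤ P0) :
    intv α pstar P0 pstar = 0 := by
  simp [intv, hP0]

theorem intv_update_self {N : ℕ} (α pstar : Fin N → ℝ) (P0 : ℝ) (i : Fin N) (q : ℝ) :
    intv α pstar P0 (Function.update pstar i q) = min (α i * |q - pstar i|) P0 := by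
  rw [intv, Fintype.sum_eq_single i fun j hj => by simp [Function.update_of_ne hj]]
  simp

theorem sinr_self {N : ℕ} (h : Fin N → Fin N → ℝ) (h0 n α pstar : Fin N → ℝ) {P0 : ℝ}
    (hP0 : 0 ≤ P0) (i : Fin N) :
    sinr h h0 n α pstar P0 i pstar =
      h i i * pstar i / (∑ j ∈ univ.erase i, h i j * pstar j + n i) := by
  simp [sinr, intv_self α pstar hP0]

theorem sinr_update_self {N : ℕ} (h : Fin N → Fin N → ℝ) (h0 n α pstar : Fin N → ℝ)
    (P0 : ℝ) (i : Fin N) (q : ℝ) :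
    sinr h h0 n α pstar P0 i (Function.update pstar i q) =
      h i i * q / (h0 i * min (α i * |q - pstar i|) P0 +
        (∑ j ∈ univ.erase i, h i j * pstar j + n i)) := by
  have hsum : ∑ j ∈ univ.erase i, h i j * Function.update pstar i q j =
      ∑ j ∈ univ.erase i, h i j * pstar j :=
    sum_congr rfl fun j hj => by rw [Function.update_of_ne (ne_of_mem_erase hj)]
  rw [sinr, intv_update_self, hsum, Function.update_self, add_assoc]

theorem mul_div_add_le_mul_div {a q p x I : ℝ} (ha : 0 ≤ a) (hx : 0 ≤ x) (hI : 0 < I)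
    (hgain : (q - p) * I ≤ p * x) :
    a * q / (x + I) ≤ a * p / I := by
  rw [div_le_div_iff₀ (by positivity) hI]
  have hqI : q * I ≤ p * (x + I) := by linarith
  calc a * q * I = a * (q * I) := by ring
    _ ≤ a * (p * (x + I)) := mul_le_mul_of_nonneg_left hqI ha
    _ = a * p * (x + I) := by ring

theorem sub_mul_le_mul_intervention {p q Pmax I c α P0 : ℝ} (hp : 0 < p) (hc : 0 < c)
    (hI : 0 ≤ I) (hα0 : 0 ≤ α) (hP0 : 0 ≤ P0) (hq : q ≤ Pmax)
    (hα : p < Pmax → I / (p * c) ≤ α) (hP0c : p < Pmax → (Pmax - p) * I / (p * c) ≤ P0) :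
    (q - p) * I ≤ p * (c * min (α * |q - p|) P0) := by
  have hpc : 0 < p * c := mul_pos hp hc
  rcases le_or_gt q p with hle | hlt
  · have : (q - p) * I ≤ 0 := mul_nonpos_of_nonpos_of_nonneg (by linarith) hI
    have : 0 ≤ p * (c * min (α * |q - p|) P0) := by positivity
    linarith
  have hpP : p < Pmax := hlt.trans_le hq
  rw [← mul_assoc, mul_min_of_nonneg _ _ hpc.le, le_min_iff, abs_of_pos (sub_pos.2 hlt)]
  constructor
  · calc (q - p) * I ≤ (q - p) * (p * c * α) := by
          gcongr; exact (div_le_iff₀' hpc).1 (hα hpP)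
      _ = p * c * (α * (q - p)) := by ring
  · calc (q - p) * I ≤ (Pmax - p) * I := by gcongr
      _ ≤ p * c * P0 := (div_le_iff₀' hpc).1 (hP0c hpP)

theorem stmt2_general (N : ℕ) (h : Fin N → Fin N → ℝ) (h0 n Pmax pstar α : Fin N → ℝ) (P0 : ℝ)
    (hh : ∀ i j, 0 < h i j) (hh0 : ∀ i, 0 < h0 i) (hn : ∀ i, 0 < n i)
    (hp1 : ∀ i, 0 < pstar i)
    (hα0 : ∀ i, 0 ≤ α i) (hP0 : 0 < P0)
    (hα : ∀ i, pstar i < Pmax i →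
      (∑ j ∈ univ.erase i, h i j * pstar j + n i) / (pstar i * h0 i) ≤ α i)
    (hP0c : ∀ i, pstar i < Pmax i →
      (Pmax i - pstar i) * (∑ j ∈ univ.erase i, h i j * pstar j + n i) /
        (pstar i * h0 i) ≤ P0) :
    isNE Pmax (sinr h h0 n α pstar P0) pstar := by
  intro i q _ hqP
  have hI : 0 < ∑ j ∈ univ.erase i, h i j * pstar j + n i :=
    add_pos_of_nonneg_of_pos
      (sum_nonneg fun j _ => mul_nonneg (hh i j).le (hp1 j).le) (hn i)
  rw [sinr_update_self, sinr_self h h0 n α pstar hP0.le]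
  exact mul_div_add_le_mul_div (hh i i).le
    (mul_nonneg (hh0 i).le (le_min (mul_nonneg (hα0 i) (abs_nonneg _)) hP0.le)) hI
    (sub_mul_le_mul_intervention (hp1 i) (hh0 i) hI.le (hα0 i) hP0.le hqP (hα i) (hP0c i))

/-- Theorem 1, 'if' direction: the stated lower bounds on the intervention rates
and the power budget imply that the target `p*` is a Nash equilibrium. -/
theorem stmt2 (N : ℕ) (h : Fin N → Fin N → ℝ) (h0 n Pmax pstar α : Fin N → ℝ) (P0 : ℝ)
    (hh : ∀ i j, 0 < h i j) (hh0 : ∀ i, 0 < h0 i) (hn : ∀ i, 0 < n i)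
    (hP : ∀ i, 0 < Pmax i) (hp1 : ∀ i, 0 < pstar i) (hp2 : ∀ i, pstar i ≤ Pmax i)
    (hα0 : ∀ i, 0 ≤ α i) (hP0 : 0 < P0)
    (hα : ∀ i, pstar i < Pmax i →
      (∑ j ∈ univ.erase i, h i j * pstar j + n i) / (pstar i * h0 i) ≤ α i)
    (hP0c : ∀ i, pstar i < Pmax i →
      (Pmax i - pstar i) * (∑ j ∈ univ.erase i, h i j * pstar j + n i) /
        (pstar i * h0 i) ≤ P0) :
    isNE Pmax (sinr h h0 n α pstar P0) pstar :=
  stmt2_general N h h0 n Pmax pstar α P0 hh hh0 hn hp1 hα0 hP0 hα hP0c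
end

section
/- Under a first-order intervention rule f(p) = [Σ_i α_i |p_i - p_i*|]_0^{P_0} with target p*, if P_0 ≤ Σ_{j≠i} α_j (P_j - p_j*) for all users i with p_i* < P_i (and the conditions of Theorem 1 hold so that p* is a NE), then the maximum power profile P = (P_1,...,P_N) is also a Nash equilibrium of the induced game; in particular p* is not strongly sustained. -/
open Finset

/-!
At the maximal profile `P`, a deviation of user `i` can only lower its own power and leaves
the interference of the other users unchanged, so it pays off only if it lowers the
intervention level. It cannot: if `p*_i = P_i`, the terms of the other users in `f` are
unchanged and user `i`'s own term can only grow; if `p*_i < P_i`, the terms of the other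
users alone already saturate `f` at `P₀`.
-/

section Intervention

variable {N : ℕ} {α pstar : Fin N → ℝ} {P0 : ℝ}

theorem intv_nonneg (hα : ∀ j, 0 ≤ α j) (hP0 : 0 ≤ P0) (p : Fin N → ℝ) :
    0 ≤ intv α pstar P0 p :=
  le_min (sum_nonneg fun j _ => mul_nonneg (hα j) (abs_nonneg _)) hP0

theorem intv_update (p : Fin N → ℝ) (i : Fin N) (q : ℝ) :
    intv α pstar P0 (Function.update p i q) =
      min (α i * |q - pstar i| + ∑ j ∈ univ.erase i, α j * |p j - pstar j|) P0 := by
  rw [intv, ← add_sum_erase _ _ (mem_univ i), Function.update_self]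
  congr 2
  exact sum_congr rfl fun j hj => by rw [Function.update_of_ne (ne_of_mem_erase hj)]

theorem intv_le_intv_update {p : Fin N → ℝ} {i : Fin N} (hα : 0 ≤ α i)
    (hsat : p i = pstar i ∨ P0 ≤ ∑ j ∈ univ.erase i, α j * |p j - pstar j|) (q : ℝ) :
    intv α pstar P0 p ≤ intv α pstar P0 (Function.update p i q) := by
  have hp := intv_update (α := α) (pstar := pstar) (P0 := P0) p i (p i)
  rw [Function.update_eq_self] at hp
  have hpi : 0 ≤ α i * |p i - pstar i| := mul_nonneg hα (abs_nonneg _)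
  have hq : 0 ≤ α i * |q - pstar i| := mul_nonneg hα (abs_nonneg _)
  rw [hp, intv_update]
  rcases hsat with hfix | hsat
  · rw [hfix, sub_self, abs_zero, mul_zero]
    exact min_le_min_right _ (by linarith)
  · exact (min_le_right _ _).trans (le_min (by linarith) le_rfl)

end Intervention

section Game

variable {N : ℕ} (h : Fin N → Fin N → ℝ) (h0 n : Fin N → ℝ) {α pstar : Fin N → ℝ} {P0 : ℝ}

theorem sinr_update_le_of_intv_le {p : Fin N → ℝ} {i : Fin N} {q : ℝ}
    (hhii : 0 ≤ h i i) (hh0 : 0 ≤ h0 i) (hpi : 0 ≤ p i)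
    (hD : 0 < h0 i * intv α pstar P0 p + ∑ j ∈ univ.erase i, h i j * p j + n i)
    (hq : q ≤ p i) (hf : intv α pstar P0 p ≤ intv α pstar P0 (Function.update p i q)) :
    sinr h h0 n α pstar P0 i (Function.update p i q) ≤ sinr h h0 n α pstar P0 i p := by
  have hI : ∑ j ∈ univ.erase i, h i j * Function.update p i q j =
      ∑ j ∈ univ.erase i, h i j * p j :=
    sum_congr rfl fun j hj => by rw [Function.update_of_ne (ne_of_mem_erase hj)]
  rw [sinr, sinr, hI, Function.update_self]
  exact div_le_div₀ (mul_nonneg hhii hpi) (mul_le_mul_of_nonneg_left hq hhii) hD (by gcongr)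

theorem isNE_max_of_intv_le_update (Pmax : Fin N → ℝ) (hh : ∀ i j, 0 ≤ h i j)
    (hh0 : ∀ i, 0 ≤ h0 i) (hn : ∀ i, 0 < n i) (hP : ∀ i, 0 ≤ Pmax i) (hα : ∀ i, 0 ≤ α i)
    (hP0 : 0 ≤ P0)
    (hf : ∀ i q, intv α pstar P0 Pmax ≤ intv α pstar P0 (Function.update Pmax i q)) :
    isNE Pmax (sinr h h0 n α pstar P0) Pmax := by
  intro i q _ hq
  refine sinr_update_le_of_intv_le h h0 n (hh i i) (hh0 i) (hP i) ?_ hq (hf i q)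
  have hfP := mul_nonneg (hh0 i) (intv_nonneg (pstar := pstar) hα hP0 Pmax)
  have hI := sum_nonneg fun j (_ : j ∈ univ.erase i) => mul_nonneg (hh i j) (hP j)
  linarith [hn i]

end Game

theorem stmt4_general (N : ℕ) (h : Fin N → Fin N → ℝ) (h0 n Pmax pstar α : Fin N → ℝ) (P0 : ℝ)
    (hh : ∀ i j, 0 < h i j) (hh0 : ∀ i, 0 < h0 i) (hn : ∀ i, 0 < n i)
    (hP : ∀ i, 0 < Pmax i) (hp2 : ∀ i, pstar i ≤ Pmax i)
    (hα0 : ∀ i, 0 ≤ α i) (hP0 : 0 < P0)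
    (hsmall : ∀ i, pstar i < Pmax i →
      P0 ≤ ∑ j ∈ univ.erase i, α j * (Pmax j - pstar j)) :
    isNE Pmax (sinr h h0 n α pstar P0) Pmax ∧
    (pstar ≠ Pmax →
      ¬ (∀ p : Fin N → ℝ, (∀ i, 0 ≤ p i ∧ p i ≤ Pmax i) →
          isNE Pmax (sinr h h0 n α pstar P0) p → p = pstar)) := by
  have hf : ∀ i q, intv α pstar P0 Pmax ≤ intv α pstar P0 (Function.update Pmax i q) := by
    intro i q
    refine intv_le_intv_update (hα0 i) ?_ q
    rcases (hp2 i).lt_or_eq with hlt | heq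
    · right
      calc P0 ≤ ∑ j ∈ univ.erase i, α j * (Pmax j - pstar j) := hsmall i hlt
        _ = ∑ j ∈ univ.erase i, α j * |Pmax j - pstar j| :=
          sum_congr rfl fun j _ => by rw [abs_of_nonneg (sub_nonneg.mpr (hp2 j))]
    · exact Or.inl heq.symm
  have hNE : isNE Pmax (sinr h h0 n α pstar P0) Pmax :=
    isNE_max_of_intv_le_update h h0 n Pmax (fun i j => (hh i j).le) (fun i => (hh0 i).le) hn
      (fun i => (hP i).le) hα0 hP0.le hf
  exact ⟨hNE, fun hne huniq => hne (huniq Pmax (fun i => ⟨(hP i).le, le_rfl⟩) hNE).symm⟩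

/-- If `P₀ ≤ ∑_{j≠i} α_j (P_j - p_j*)` for every user `i` with `p_i* < P_i`
(and the conditions of Theorem 1 hold, so that `p*` is a NE), then the maximum
power profile `P` is also a Nash equilibrium; in particular, if `p* ≠ P`, the
target is not strongly sustained (not the unique NE). -/
theorem stmt4 (N : ℕ) (h : Fin N → Fin N → ℝ) (h0 n Pmax pstar α : Fin N → ℝ) (P0 : ℝ)
    (hh : ∀ i j, 0 < h i j) (hh0 : ∀ i, 0 < h0 i) (hn : ∀ i, 0 < n i)
    (hP : ∀ i, 0 < Pmax i) (hp1 : ∀ i, 0 < pstar i) (hp2 : ∀ i, pstar i ≤ Pmax i)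
    (hα0 : ∀ i, 0 ≤ α i) (hP0 : 0 < P0)
    (hα : ∀ i, pstar i < Pmax i →
      (∑ j ∈ univ.erase i, h i j * pstar j + n i) / (pstar i * h0 i) ≤ α i)
    (hP0c : ∀ i, pstar i < Pmax i →
      (Pmax i - pstar i) * (∑ j ∈ univ.erase i, h i j * pstar j + n i) /
        (pstar i * h0 i) ≤ P0)
    (hsmall : ∀ i, pstar i < Pmax i →
      P0 ≤ ∑ j ∈ univ.erase i, α j * (Pmax j - pstar j)) :
    isNE Pmax (sinr h h0 n α pstar P0) Pmax ∧
    (pstar ≠ Pmax →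
      ¬ (∀ p : Fin N → ℝ, (∀ i, 0 ≤ p i ∧ p i ≤ Pmax i) →
          isNE Pmax (sinr h h0 n α pstar P0) p → p = pstar)) :=
  stmt4_general N h h0 n Pmax pstar α P0 hh hh0 hn hP hp2 hα0 hP0 hsmall
end

section
/- For any target profile p* ∈ ∏_i (0,P_i] with Σ_{i=1}^N (P_i - p_i*)/P_i < 1, there exists a vector of nonnegative intervention rates (α_1,...,α_N) such that α_i > (1/p_i*) Σ_{j≠i} α_j (P_j - p_j*) + (Σ_{j≠i} h_ij P_j + n_i)/(p_i* h_{i0}) for every user i with p_i* < P_i. -/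
/-!
Take rates inversely proportional to the maximal powers, `α j = K / P j`. With the slack
`δ = 1 - ∑ j, (P j - p j) / P j > 0`, the interference term of user `i` becomes
`∑ j ≠ i, α j * (P j - p j) = K * (p i / P i - δ)`, so the inequality for user `i` reduces to
`p i * c i < K * δ`, which holds for every `i` once `K` is large.
-/

open Finset

lemma exists_pos_forall_lt_mul {ι : Type*} [Finite ι] {δ : ℝ} (hδ : 0 < δ) (c : ι → ℝ) :
    ∃ K > 0, ∀ i, c i < K * δ := by
  obtain ⟨M, hM⟩ := (Set.finite_range c).bddAbove
  refine ⟨(max M 0 + 1) / δ, by positivity, fun i => ?_⟩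
  rw [div_mul_cancel₀ _ hδ.ne']
  have hci : c i ≤ M := hM (Set.mem_range_self i)
  linarith [le_max_left M 0]

variable {ι : Type*} [Fintype ι] [DecidableEq ι]

lemma sum_erase_div_mul_sub (K : ℝ) {P : ι → ℝ} (hP : ∀ i, P i ≠ 0) (p : ι → ℝ) (i : ι) :
    ∑ j ∈ univ.erase i, K / P j * (P j - p j)
      = K * (p i / P i - (1 - ∑ j, (P j - p j) / P j)) := by
  have hterm : ∀ j, K / P j * (P j - p j) = K * ((P j - p j) / P j) := fun j => by ring
  simp only [hterm, ← mul_sum, sum_erase_eq_sub (mem_univ i)]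
  field_simp [hP i]
  ring

theorem exists_nonneg_lt_inv_mul_sum_erase_add {P p : ι → ℝ} (hP : ∀ i, 0 < P i)
    (hp : ∀ i, 0 < p i) (hsum : ∑ i, (P i - p i) / P i < 1) (c : ι → ℝ) :
    ∃ α : ι → ℝ, (∀ i, 0 ≤ α i) ∧
      ∀ i, (1 / p i) * ∑ j ∈ univ.erase i, α j * (P j - p j) + c i < α i := by
  set δ := 1 - ∑ j, (P j - p j) / P j
  obtain ⟨K, hK, hKc⟩ := exists_pos_forall_lt_mul (sub_pos.mpr hsum) fun i => p i * c i
  refine ⟨fun i => K / P i, fun i => (div_pos hK (hP i)).le, fun i => ?_⟩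
  rw [sum_erase_div_mul_sub K (fun j => (hP j).ne') p i]
  have hslack : K / P i - (1 / p i * (K * (p i / P i - δ)) + c i) = (K * δ - p i * c i) / p i := by
    field_simp [(hp i).ne', (hP i).ne']
    ring
  have hgap := div_pos (sub_pos.mpr (hKc i)) (hp i)
  linarith

theorem stmt6_general (N : ℕ) (h : Fin N → Fin N → ℝ) (h0 n Pmax pstar : Fin N → ℝ)
    (hP : ∀ i, 0 < Pmax i) (hp1 : ∀ i, 0 < pstar i)
    (hsum : ∑ i, (Pmax i - pstar i) / Pmax i < 1) :
    ∃ α : Fin N → ℝ, (∀ i, 0 ≤ α i) ∧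
      ∀ i : Fin N, pstar i < Pmax i →
        (1 / pstar i) * ∑ j ∈ univ.erase i, α j * (Pmax j - pstar j)
          + (∑ j ∈ univ.erase i, h i j * Pmax j + n i) / (pstar i * h0 i) < α i := by
  obtain ⟨α, hα0, hα⟩ := exists_nonneg_lt_inv_mul_sum_erase_add hP hp1 hsum
    fun i => (∑ j ∈ univ.erase i, h i j * Pmax j + n i) / (pstar i * h0 i)
  exact ⟨α, hα0, fun i _ => hα i⟩

/-- For any target `p* ∈ ∏_i (0, P_i]` with `∑_i (P_i - p_i*)/P_i < 1`, there exist
nonnegative intervention rates solving the system of strict linear inequalities. -/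
theorem stmt6 (N : ℕ) (h : Fin N → Fin N → ℝ) (h0 n Pmax pstar : Fin N → ℝ)
    (hh : ∀ i j, 0 < h i j) (hh0 : ∀ i, 0 < h0 i) (hn : ∀ i, 0 < n i)
    (hP : ∀ i, 0 < Pmax i) (hp1 : ∀ i, 0 < pstar i) (hp2 : ∀ i, pstar i ≤ Pmax i)
    (hsum : ∑ i, (Pmax i - pstar i) / Pmax i < 1) :
    ∃ α : Fin N → ℝ, (∀ i, 0 ≤ α i) ∧
      ∀ i : Fin N, pstar i < Pmax i →
        (1 / pstar i) * ∑ j ∈ univ.erase i, α j * (Pmax j - pstar j)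
          + (∑ j ∈ univ.erase i, h i j * Pmax j + n i) / (pstar i * h0 i) < α i :=
  stmt6_general N h h0 n Pmax pstar hP hp1 hsum
end

section
/- (Theorem 3, sustainment part) Suppose Σ_{i=1}^N (P_i - p_i*)/P_i < 1 and the rates α_i satisfy α_i > (1/p_i*) Σ_{j≠i} α_j (P_j - p_j*) + (Σ_{j≠i} h_ij P_j + n_i)/(p_i* h_{i0}) and P_0 > (P_i/p_i*) Σ_{j≠i} α_j (P_j - p_j*) + (P_i - p_i*)(Σ_{j≠i} h_ij P_j + n_i)/(p_i* h_{i0}) for all i with p_i* < P_i. Then under the first-order intervention rule f(p) = [Σ_i α_i |p_i - p_i*|]_0^{P_0}, the target p* is the unique Nash equilibrium; moreover p_i* is a best response of user i to any opponent profile p_{-i} ∈ ∏_{j≠i}[p_j*, P_j]. -/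
open Finset

/-!
Fix user `i` and the opponents. Below `p_i*`, raising the own power raises the signal while the
intervention only grows with `|p_i - p_i*|`, so `p_i*` beats every `q < p_i*`. Above `p_i*`,
with opponents in `∏_{j≠i} [p_j*, P_j]`, the bound on `α_i` makes the uncapped intervention
grow faster than the signal, and the bound on `P_0` makes the capped intervention `P_0` already
outweigh the largest possible gain. Hence `p_i*` is a strict best response there, so `p*` is an
equilibrium; at any equilibrium `p`, first `p_i* ≤ p_i` for all `i` (else `p_i*` is a strict
improvement), and then the opponents lie in the box, which forces `p_i = p_i*`.
-/

-- user `i`'s payoff as a function of its own power `q`, the others fixed: `a = h_ii`,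
-- `c = h_i0`, `x = p_i*`, `s = ∑_{j≠i} α_j |p_j - p_j*|`, `b = ∑_{j≠i} h_ij p_j + n_i`
noncomputable def responsePayoff (a c α x s P0 b q : ℝ) : ℝ :=
  a * q / (c * min (α * |q - x| + s) P0 + b)

section responsePayoff

variable {a c α x s P0 b q : ℝ}

lemma responsePayoff_lt_of_lt (ha : 0 < a) (hc : 0 ≤ c) (hα : 0 ≤ α) (hs : 0 ≤ s)
    (hP0 : 0 ≤ P0) (hb : 0 < b) (hq : 0 ≤ q) (hqx : q < x) :
    responsePayoff a c α x s P0 b q < responsePayoff a c α x s P0 b x := by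
  have hDx : 0 < c * min s P0 + b := by
    have := mul_nonneg hc (le_min hs hP0)
    linarith
  have hDle : c * min s P0 + b ≤ c * min (α * |q - x| + s) P0 + b := by
    have : min s P0 ≤ min (α * |q - x| + s) P0 :=
      min_le_min_right _ (le_add_of_nonneg_left (mul_nonneg hα (abs_nonneg _)))
    nlinarith
  unfold responsePayoff
  rw [sub_self, abs_zero, mul_zero, zero_add]
  calc a * q / (c * min (α * |q - x| + s) P0 + b)
      ≤ a * q / (c * min s P0 + b) := div_le_div_of_nonneg_left (by positivity) hDx hDle
    _ < a * x / (c * min s P0 + b) := by gcongr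

-- `hrate` settles the case where the intervention stays below its cap `P0`, `hcap` the capped one.
lemma responsePayoff_lt_of_gt {P : ℝ} (ha : 0 < a) (hc : 0 ≤ c) (hα : 0 ≤ α) (hx : 0 ≤ x)
    (hs : 0 ≤ s) (hP0 : 0 ≤ P0) (hb : 0 < b) (hxq : x < q) (hqP : q ≤ P)
    (hrate : c * s + b < α * x * c) (hcap : P * (c * s) + (P - x) * b < x * c * P0) :
    responsePayoff a c α x s P0 b q < responsePayoff a c α x s P0 b x := by
  have hDx : 0 < c * min s P0 + b := by
    have := mul_nonneg hc (le_min hs hP0)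
    linarith
  have hDq : 0 < c * min (α * (q - x) + s) P0 + b := by
    have := mul_nonneg hc (le_min (add_nonneg (mul_nonneg hα (sub_nonneg.2 hxq.le)) hs) hP0)
    linarith
  unfold responsePayoff
  rw [sub_self, abs_zero, mul_zero, zero_add, abs_of_pos (sub_pos.2 hxq),
    div_lt_div_iff₀ hDq hDx, mul_assoc, mul_assoc]
  refine mul_lt_mul_of_pos_left ?_ ha
  rcases le_total (α * (q - x) + s) P0 with hle | hge
  · have hsP0 : s ≤ P0 := by nlinarith [mul_nonneg hα (sub_nonneg.2 hxq.le)]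
    rw [min_eq_left hle, min_eq_left hsP0]
    nlinarith [mul_lt_mul_of_pos_right hrate (sub_pos.2 hxq)]
  · rw [min_eq_right hge]
    calc q * (c * min s P0 + b) ≤ P * (c * s + b) :=
          mul_le_mul hqP (by nlinarith [min_le_left s P0]) hDx.le (hx.trans hxq.le |>.trans hqP)
      _ < x * (c * P0 + b) := by linarith

end responsePayoff

lemma clear_rate_bound {x c t u α : ℝ} (hx : 0 < x) (hc : 0 < c)
    (h : 1 / x * t + u / (x * c) < α) : c * t + u < α * x * c := by
  have key : 1 / x * t + u / (x * c) = (c * t + u) / (x * c) := by field_simp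
  rw [key, div_lt_iff₀ (by positivity)] at h
  linarith

lemma clear_cap_bound {x c t u P P0 : ℝ} (hx : 0 < x) (hc : 0 < c)
    (h : P / x * t + (P - x) * u / (x * c) < P0) : P * (c * t) + (P - x) * u < x * c * P0 := by
  have key : P / x * t + (P - x) * u / (x * c) = (P * (c * t) + (P - x) * u) / (x * c) := by
    field_simp
  rw [key, div_lt_iff₀ (by positivity)] at h
  linarith

section sinr

variable {N : ℕ} (h : Fin N → Fin N → ℝ) (h0 n α pstar : Fin N → ℝ) (P0 : ℝ)

lemma sinr_update_eq_responsePayoff (i : Fin N) (p : Fin N → ℝ) (q : ℝ) :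
    sinr h h0 n α pstar P0 i (Function.update p i q) =
      responsePayoff (h i i) (h0 i) (α i) (pstar i)
        (∑ j ∈ univ.erase i, α j * |p j - pstar j|) P0
        (∑ j ∈ univ.erase i, h i j * p j + n i) q := by
  have hothers : ∀ g : Fin N → ℝ → ℝ,
      ∑ j ∈ univ.erase i, g j (Function.update p i q j) =
      ∑ j ∈ univ.erase i, g j (p j) := fun g =>
    sum_congr rfl fun j hj => by rw [Function.update_of_ne (ne_of_mem_erase hj)]
  rw [sinr, intv, responsePayoff, ← add_sum_erase _ _ (mem_univ i),
    hothers fun j y => α j * |y - pstar j|, hothers fun j y => h i j * y,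
    Function.update_self, add_assoc]

variable {h h0 n α pstar P0}

lemma sinr_update_lt_of_lt (hh : ∀ i j, 0 < h i j) (hh0 : ∀ i, 0 < h0 i) (hn : ∀ i, 0 < n i)
    (hα0 : ∀ i, 0 ≤ α i) (hP0 : 0 < P0) {i : Fin N} {p : Fin N → ℝ}
    (hp : ∀ j, j ≠ i → 0 ≤ p j) {q : ℝ} (hq0 : 0 ≤ q) (hq : q < pstar i) :
    sinr h h0 n α pstar P0 i (Function.update p i q) <
      sinr h h0 n α pstar P0 i (Function.update p i (pstar i)) := by
  simp only [sinr_update_eq_responsePayoff]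
  refine responsePayoff_lt_of_lt (hh i i) (hh0 i).le (hα0 i)
    (sum_nonneg fun j _ => mul_nonneg (hα0 j) (abs_nonneg _)) hP0.le ?_ hq0 hq
  have : 0 ≤ ∑ j ∈ univ.erase i, h i j * p j :=
    sum_nonneg fun j hj => mul_nonneg (hh i j).le (hp j (ne_of_mem_erase hj))
  linarith [hn i]

lemma sinr_update_lt_of_gt {Pmax : Fin N → ℝ} (hh : ∀ i j, 0 < h i j)
    (hh0 : ∀ i, 0 < h0 i) (hn : ∀ i, 0 < n i) (hp1 : ∀ i, 0 < pstar i)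
    (hα0 : ∀ i, 0 ≤ α i) (hP0 : 0 < P0)
    (hα : ∀ i : Fin N, pstar i < Pmax i →
      (1 / pstar i) * ∑ j ∈ univ.erase i, α j * (Pmax j - pstar j)
        + (∑ j ∈ univ.erase i, h i j * Pmax j + n i) / (pstar i * h0 i) < α i)
    (hP0c : ∀ i : Fin N, pstar i < Pmax i →
      (Pmax i / pstar i) * ∑ j ∈ univ.erase i, α j * (Pmax j - pstar j)
        + (Pmax i - pstar i) * (∑ j ∈ univ.erase i, h i j * Pmax j + n i) /
          (pstar i * h0 i) < P0)
    {i : Fin N} {p : Fin N → ℝ} (hp : ∀ j, j ≠ i → pstar j ≤ p j ∧ p j ≤ Pmax j)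
    {q : ℝ} (hq : pstar i < q) (hqP : q ≤ Pmax i) :
    sinr h h0 n α pstar P0 i (Function.update p i q) <
      sinr h h0 n α pstar P0 i (Function.update p i (pstar i)) := by
  have hPi : pstar i < Pmax i := hq.trans_le hqP
  have hdev : ∑ j ∈ univ.erase i, α j * |p j - pstar j| ≤
      ∑ j ∈ univ.erase i, α j * (Pmax j - pstar j) := sum_le_sum fun j hj => by
    obtain ⟨hlo, hhi⟩ := hp j (ne_of_mem_erase hj)
    rw [abs_of_nonneg (sub_nonneg.2 hlo)]
    exact mul_le_mul_of_nonneg_left (by linarith) (hα0 j)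
  have hint : ∑ j ∈ univ.erase i, h i j * p j ≤ ∑ j ∈ univ.erase i, h i j * Pmax j :=
    sum_le_sum fun j hj => mul_le_mul_of_nonneg_left (hp j (ne_of_mem_erase hj)).2 (hh i j).le
  have hint0 : 0 ≤ ∑ j ∈ univ.erase i, h i j * p j := sum_nonneg fun j hj =>
    mul_nonneg (hh i j).le ((hp1 j).le.trans (hp j (ne_of_mem_erase hj)).1)
  have hrate := clear_rate_bound (hp1 i) (hh0 i) (hα i hPi)
  have hcap := clear_cap_bound (hp1 i) (hh0 i) (hP0c i hPi)
  simp only [sinr_update_eq_responsePayoff]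
  refine responsePayoff_lt_of_gt (hh i i) (hh0 i).le (hα0 i) (hp1 i).le
    (sum_nonneg fun j _ => mul_nonneg (hα0 j) (abs_nonneg _)) hP0.le (by linarith [hn i])
    hq hqP ?_ ?_
  · nlinarith [mul_le_mul_of_nonneg_left hdev (hh0 i).le]
  · nlinarith [mul_le_mul_of_nonneg_left hdev (hh0 i).le, hn i,
      mul_le_mul_of_nonneg_left hint (sub_nonneg.2 hPi.le), hp1 i]

lemma sinr_update_le_update_pstar {Pmax : Fin N → ℝ} (hh : ∀ i j, 0 < h i j)
    (hh0 : ∀ i, 0 < h0 i) (hn : ∀ i, 0 < n i) (hp1 : ∀ i, 0 < pstar i)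
    (hα0 : ∀ i, 0 ≤ α i) (hP0 : 0 < P0)
    (hα : ∀ i : Fin N, pstar i < Pmax i →
      (1 / pstar i) * ∑ j ∈ univ.erase i, α j * (Pmax j - pstar j)
        + (∑ j ∈ univ.erase i, h i j * Pmax j + n i) / (pstar i * h0 i) < α i)
    (hP0c : ∀ i : Fin N, pstar i < Pmax i →
      (Pmax i / pstar i) * ∑ j ∈ univ.erase i, α j * (Pmax j - pstar j)
        + (Pmax i - pstar i) * (∑ j ∈ univ.erase i, h i j * Pmax j + n i) /
          (pstar i * h0 i) < P0)
    {i : Fin N} {p : Fin N → ℝ} (hp : ∀ j, j ≠ i → pstar j ≤ p j ∧ p j ≤ Pmax j)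
    {q : ℝ} (hq0 : 0 ≤ q) (hqP : q ≤ Pmax i) :
    sinr h h0 n α pstar P0 i (Function.update p i q) ≤
      sinr h h0 n α pstar P0 i (Function.update p i (pstar i)) := by
  rcases lt_trichotomy q (pstar i) with hlt | rfl | hgt
  · exact (sinr_update_lt_of_lt hh hh0 hn hα0 hP0
      (fun j hj => (hp1 j).le.trans (hp j hj).1) hq0 hlt).le
  · exact le_rfl
  · exact (sinr_update_lt_of_gt hh hh0 hn hp1 hα0 hP0 hα hP0c hp hgt hqP).le

end sinr

theorem stmt7_general (N : ℕ) (h : Fin N → Fin N → ℝ) (h0 n Pmax pstar α : Fin N → ℝ)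
    (P0 : ℝ)
    (hh : ∀ i j, 0 < h i j) (hh0 : ∀ i, 0 < h0 i) (hn : ∀ i, 0 < n i)
    (hp1 : ∀ i, 0 < pstar i) (hp2 : ∀ i, pstar i ≤ Pmax i)
    (hα0 : ∀ i, 0 ≤ α i) (hP0 : 0 < P0)
    (hα : ∀ i : Fin N, pstar i < Pmax i →
      (1 / pstar i) * ∑ j ∈ univ.erase i, α j * (Pmax j - pstar j)
        + (∑ j ∈ univ.erase i, h i j * Pmax j + n i) / (pstar i * h0 i) < α i)
    (hP0c : ∀ i : Fin N, pstar i < Pmax i →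
      (Pmax i / pstar i) * ∑ j ∈ univ.erase i, α j * (Pmax j - pstar j)
        + (Pmax i - pstar i) * (∑ j ∈ univ.erase i, h i j * Pmax j + n i) /
          (pstar i * h0 i) < P0) :
    (isNE Pmax (sinr h h0 n α pstar P0) pstar ∧
      ∀ p : Fin N → ℝ, (∀ i, 0 ≤ p i ∧ p i ≤ Pmax i) →
        isNE Pmax (sinr h h0 n α pstar P0) p → p = pstar) ∧
    (∀ i : Fin N, ∀ p : Fin N → ℝ,
      (∀ j, j ≠ i → pstar j ≤ p j ∧ p j ≤ Pmax j) →
      ∀ q, 0 ≤ q → q ≤ Pmax i →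
        sinr h h0 n α pstar P0 i (Function.update p i q) ≤
        sinr h h0 n α pstar P0 i (Function.update p i (pstar i))) := by
  have bestResponse := fun i p hp q hq0 hqP =>
    @sinr_update_le_update_pstar N h h0 n α pstar P0 Pmax hh hh0 hn hp1 hα0 hP0 hα hP0c i p hp
      q hq0 hqP
  refine ⟨⟨fun i q hq0 hqP => ?_, fun p hbox hNE => ?_⟩, bestResponse⟩
  · simpa using bestResponse i pstar (fun j _ => ⟨le_rfl, hp2 j⟩) q hq0 hqP
  have noGain : ∀ i, ¬ sinr h h0 n α pstar P0 i (Function.update p i (p i)) <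
      sinr h h0 n α pstar P0 i (Function.update p i (pstar i)) := fun i => by
    simpa using hNE i (pstar i) (hp1 i).le (hp2 i)
  have hge : ∀ i, pstar i ≤ p i := fun i => not_lt.1 fun hlt =>
    noGain i (sinr_update_lt_of_lt hh hh0 hn hα0 hP0 (fun j _ => (hbox j).1) (hbox i).1 hlt)
  funext i
  refine le_antisymm (not_lt.1 fun hgt => noGain i ?_) (hge i)
  exact sinr_update_lt_of_gt hh hh0 hn hp1 hα0 hP0 hα hP0c
    (fun j _ => ⟨hge j, (hbox j).2⟩) hgt (hbox i).2

/-- Theorem 3, sustainment part: under the stated strict bounds on the rates and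
the capability and `∑_i (P_i - p_i*)/P_i < 1`, the target `p*` is the unique Nash
equilibrium; moreover `p_i*` is a best response of user `i` to any opponent
profile in `∏_{j≠i} [p_j*, P_j]`. -/
theorem stmt7 (N : ℕ) (h : Fin N → Fin N → ℝ) (h0 n Pmax pstar α : Fin N → ℝ)
    (P0 : ℝ)
    (hh : ∀ i j, 0 < h i j) (hh0 : ∀ i, 0 < h0 i) (hn : ∀ i, 0 < n i)
    (hP : ∀ i, 0 < Pmax i) (hp1 : ∀ i, 0 < pstar i) (hp2 : ∀ i, pstar i ≤ Pmax i)
    (hα0 : ∀ i, 0 ≤ α i) (hP0 : 0 < P0)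
    (hsum : ∑ i, (Pmax i - pstar i) / Pmax i < 1)
    (hα : ∀ i : Fin N, pstar i < Pmax i →
      (1 / pstar i) * ∑ j ∈ univ.erase i, α j * (Pmax j - pstar j)
        + (∑ j ∈ univ.erase i, h i j * Pmax j + n i) / (pstar i * h0 i) < α i)
    (hP0c : ∀ i : Fin N, pstar i < Pmax i →
      (Pmax i / pstar i) * ∑ j ∈ univ.erase i, α j * (Pmax j - pstar j)
        + (Pmax i - pstar i) * (∑ j ∈ univ.erase i, h i j * Pmax j + n i) /
          (pstar i * h0 i) < P0) :
    (isNE Pmax (sinr h h0 n α pstar P0) pstar ∧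
      ∀ p : Fin N → ℝ, (∀ i, 0 ≤ p i ∧ p i ≤ Pmax i) →
        isNE Pmax (sinr h h0 n α pstar P0) p → p = pstar) ∧
    (∀ i : Fin N, ∀ p : Fin N → ℝ,
      (∀ j, j ≠ i → pstar j ≤ p j ∧ p j ≤ Pmax j) →
      ∀ q, 0 ≤ q → q ≤ Pmax i →
        sinr h h0 n α pstar P0 i (Function.update p i q) ≤
        sinr h h0 n α pstar P0 i (Function.update p i (pstar i))) :=
  stmt7_general N h h0 n Pmax pstar α P0 hh hh0 hn hp1 hp2 hα0 hP0 hα hP0c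
end

section
/- (Theorem 3, convergence part) Under the hypotheses of Theorem 3 (with conditions on α_i and P_0 as stated and Σ_i (P_i - p_i*)/P_i < 1), the best-response dynamics p_i^t ∈ argmax_{p_i ∈ [0,P_i]} γ_i(f(p_i, p^{t-1}_{-i}), p_i, p^{t-1}_{-i}) starting from any initial profile p^0 reaches p* in at most two steps; if p^0 ∈ ∏_i [p_i*, P_i], it reaches p* in one step. -/
open Finset

/-!
Fix all users but `i` and view user `i`'s SINR as a function of its own power `q`. Below `p_i*`,
lowering `q` shrinks the signal and raises the intervention, so every best response is at least
`p_i*`. When the other users lie in `∏ [p_j*, P_j]`, the bound on `α_i` makes the unsaturated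
intervention grow faster in `q` than the signal above `p_i*`, and the bound on `P₀` makes the
saturated intervention still too costly, so `p_i*` is the unique best response. Hence one step
lands in `∏ [p_i*, P_i]` and the next one at `p*`.
-/

/-- User `i`'s SINR at own power `q`, with `a = h_ii`, `b = h_i0`, `c` the interference plus
noise, `s = p_i*` and `S` the other users' part of the intervention sum. -/
noncomputable def sinrOfOwnPower (a b c α s S P₀ q : ℝ) : ℝ :=
  a * q / (b * min (α * |q - s| + S) P₀ + c)

section OwnPower

variable {a b c α s S P₀ q P : ℝ}

lemma sinrOfOwnPower_self :
    sinrOfOwnPower a b c α s S P₀ s = a * s / (b * min S P₀ + c) := by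
  simp [sinrOfOwnPower]

lemma sinrOfOwnPower_lt_of_lt (ha : 0 < a) (hb : 0 ≤ b) (hc : 0 < c) (hα : 0 ≤ α)
    (hS : 0 ≤ S) (hP₀ : 0 ≤ P₀) (hq : 0 ≤ q) (hqs : q < s) :
    sinrOfOwnPower a b c α s S P₀ q < sinrOfOwnPower a b c α s S P₀ s := by
  rw [sinrOfOwnPower_self, sinrOfOwnPower]
  have hmin : min S P₀ ≤ min (α * |q - s| + S) P₀ := by
    gcongr
    exact le_add_of_nonneg_left (by positivity)
  exact div_lt_div₀ (by gcongr) (by gcongr) (mul_nonneg ha.le (hq.trans hqs.le)) (by positivity)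

lemma sinrOfOwnPower_lt_of_gt (ha : 0 < a) (hb : 0 < b) (hc : 0 < c) (hs : 0 < s)
    (hS : 0 ≤ S) (hsq : s < q) (hqP : q ≤ P) (hα : b * S + c < s * b * α)
    (hP₀ : P * (b * S + c) < s * (b * P₀ + c)) :
    sinrOfOwnPower a b c α s S P₀ q < sinrOfOwnPower a b c α s S P₀ s := by
  have hden : 0 < b * S + c := by positivity
  have hSP₀ : S < P₀ := by
    have h₁ : s * (b * S + c) < s * (b * P₀ + c) :=
      (mul_le_mul_of_nonneg_right (hsq.le.trans hqP) hden.le).trans_lt hP₀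
    have h₂ : b * S < b * P₀ := by linarith [lt_of_mul_lt_mul_left h₁ hs.le]
    exact lt_of_mul_lt_mul_left h₂ hb.le
  have hden₀ : 0 < b * P₀ + c := by linarith [mul_lt_mul_of_pos_left hSP₀ hb]
  rw [sinrOfOwnPower_self, sinrOfOwnPower, min_eq_left hSP₀.le, abs_of_pos (sub_pos.2 hsq)]
  rcases min_cases (α * (q - s) + S) P₀ with ⟨hmin, -⟩ | ⟨hmin, -⟩ <;> rw [hmin]
  · have hαpos : 0 < α := pos_of_mul_pos_right (hden.trans hα) (mul_pos hs hb).le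
    rw [div_lt_div_iff₀ (by positivity) hden]
    -- the difference of the two sides is `a (q - s) (s b α - (b S + c))`
    linarith [mul_pos (mul_pos ha (sub_pos.2 hsq)) (sub_pos.2 hα)]
  · calc a * q / (b * P₀ + c) ≤ a * P / (b * P₀ + c) := by gcongr
      _ < a * s / (b * S + c) := by
        rw [div_lt_div_iff₀ hden₀ hden]
        linarith [mul_lt_mul_of_pos_left hP₀ ha]

end OwnPower

def IsBestResponse {ι : Type*} [DecidableEq ι] (Pmax : ι → ℝ) (payoff : ι → (ι → ℝ) → ℝ)
    (p : ι → ℝ) (i : ι) (x : ℝ) : Prop :=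
  0 ≤ x ∧ x ≤ Pmax i ∧
    ∀ q, 0 ≤ q → q ≤ Pmax i → payoff i (Function.update p i q) ≤ payoff i (Function.update p i x)

namespace IsBestResponse

variable {ι : Type*} [DecidableEq ι] {Pmax : ι → ℝ} {payoff : ι → (ι → ℝ) → ℝ} {p : ι → ℝ}
  {i : ι} {x y : ℝ}

lemma le_of_forall_lt (hx : IsBestResponse Pmax payoff p i x) (hy : y ≤ Pmax i)
    (hlt : ∀ q, 0 ≤ q → q < y →
      payoff i (Function.update p i q) < payoff i (Function.update p i y)) :
    y ≤ x := by
  by_contra! hxy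
  exact (hlt x hx.1 hxy).not_ge (hx.2.2 y (hx.1.trans hxy.le) hy)

lemma eq_of_forall_lt (hx : IsBestResponse Pmax payoff p i x) (hy₀ : 0 ≤ y) (hy : y ≤ Pmax i)
    (hlt : ∀ q, 0 ≤ q → q ≤ Pmax i → q ≠ y →
      payoff i (Function.update p i q) < payoff i (Function.update p i y)) :
    x = y := by
  by_contra hxy
  exact (hlt x hx.1 hx.2.1 hxy).not_ge (hx.2.2 y hy₀ hy)

end IsBestResponse

section Game

variable {N : ℕ} (h : Fin N → Fin N → ℝ) (h0 n α pstar : Fin N → ℝ) (P0 : ℝ)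

lemma sinr_update (p : Fin N → ℝ) (i : Fin N) (q : ℝ) :
    sinr h h0 n α pstar P0 i (Function.update p i q) =
      sinrOfOwnPower (h i i) (h0 i) (∑ j ∈ univ.erase i, h i j * p j + n i) (α i) (pstar i)
        (∑ j ∈ univ.erase i, α j * |p j - pstar j|) P0 q := by
  have hothers (j) (hj : j ∈ univ.erase i) : Function.update p i q j = p j :=
    Function.update_of_ne (ne_of_mem_erase hj) _ _
  rw [sinr, intv, sinrOfOwnPower, ← add_sum_erase _ _ (mem_univ i), Function.update_self,
    add_assoc]
  simp +contextual only [hothers]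

variable {h h0 n α pstar P0} {p : Fin N → ℝ} {i : Fin N} {q : ℝ}

lemma sinr_update_lt_of_lt_pstar (hhi : ∀ j, 0 < h i j) (hh0 : 0 < h0 i) (hn : 0 < n i)
    (hα0 : ∀ j, 0 ≤ α j) (hP0 : 0 ≤ P0) (hp : ∀ j, 0 ≤ p j) (hq : 0 ≤ q) (hqs : q < pstar i) :
    sinr h h0 n α pstar P0 i (Function.update p i q) <
      sinr h h0 n α pstar P0 i (Function.update p i (pstar i)) := by
  rw [sinr_update, sinr_update]
  exact sinrOfOwnPower_lt_of_lt (hhi i) hh0.le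
    (add_pos_of_nonneg_of_pos (sum_nonneg fun j _ => mul_nonneg (hhi j).le (hp j)) hn) (hα0 i)
    (sum_nonneg fun j _ => mul_nonneg (hα0 j) (abs_nonneg _)) hP0 hq hqs

lemma sinr_update_lt_of_pstar_lt (hhi : ∀ j, 0 < h i j) (hh0 : 0 < h0 i) (hn : 0 < n i)
    (hα0 : ∀ j, 0 ≤ α j) (hp1 : 0 < pstar i) {Pmax : Fin N → ℝ} (hp : ∀ j, 0 ≤ p j)
    (hlo : ∀ j, pstar j ≤ p j) (hup : ∀ j, p j ≤ Pmax j)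
    (hαi : (1 / pstar i) * ∑ j ∈ univ.erase i, α j * (Pmax j - pstar j)
        + (∑ j ∈ univ.erase i, h i j * Pmax j + n i) / (pstar i * h0 i) < α i)
    (hP0i : (Pmax i / pstar i) * ∑ j ∈ univ.erase i, α j * (Pmax j - pstar j)
        + (Pmax i - pstar i) * (∑ j ∈ univ.erase i, h i j * Pmax j + n i) /
          (pstar i * h0 i) < P0)
    (hsq : pstar i < q) (hqP : q ≤ Pmax i) :
    sinr h h0 n α pstar P0 i (Function.update p i q) <
      sinr h h0 n α pstar P0 i (Function.update p i (pstar i)) := by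
  set S := ∑ j ∈ univ.erase i, α j * |p j - pstar j|
  set C := ∑ j ∈ univ.erase i, h i j * p j
  set Smax := ∑ j ∈ univ.erase i, α j * (Pmax j - pstar j)
  set Cmax := ∑ j ∈ univ.erase i, h i j * Pmax j
  have hS : 0 ≤ S := sum_nonneg fun j _ => mul_nonneg (hα0 j) (abs_nonneg _)
  have hC : 0 ≤ C := sum_nonneg fun j _ => mul_nonneg (hhi j).le (hp j)
  have hSmax : S ≤ Smax := sum_le_sum fun j _ => by
    rw [abs_of_nonneg (sub_nonneg.2 (hlo j))]
    exact mul_le_mul_of_nonneg_left (by linarith [hup j]) (hα0 j)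
  have hCmax : C ≤ Cmax := sum_le_sum fun j _ => mul_le_mul_of_nonneg_left (hup j) (hhi j).le
  have hα' : h0 i * Smax + (Cmax + n i) < pstar i * h0 i * α i :=
    calc _ = pstar i * h0 i * ((1 / pstar i) * Smax + (Cmax + n i) / (pstar i * h0 i)) := by
          field_simp
      _ < _ := by gcongr
  have hP0' : h0 i * (Pmax i * Smax) + (Pmax i - pstar i) * (Cmax + n i) < pstar i * h0 i * P0 :=
    calc _ = pstar i * h0 i * ((Pmax i / pstar i) * Smax
          + (Pmax i - pstar i) * (Cmax + n i) / (pstar i * h0 i)) := by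
          field_simp
      _ < _ := by gcongr
  rw [sinr_update, sinr_update]
  refine sinrOfOwnPower_lt_of_gt (hhi i) hh0 (by linarith) hp1 hS hsq hqP ?_ ?_
  · linarith [mul_le_mul_of_nonneg_left hSmax hh0.le]
  · linarith [mul_le_mul_of_nonneg_left (mul_le_mul_of_nonneg_left hSmax hh0.le)
      (hp1.le.trans (hsq.le.trans hqP)),
      mul_le_mul_of_nonneg_left (add_le_add_right hCmax (n i)) (sub_nonneg.2 (hsq.le.trans hqP))]

lemma pstar_le_of_isBestResponse (hhi : ∀ j, 0 < h i j) (hh0 : 0 < h0 i) (hn : 0 < n i)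
    (hα0 : ∀ j, 0 ≤ α j) (hP0 : 0 ≤ P0) {Pmax : Fin N → ℝ} (hsP : pstar i ≤ Pmax i)
    (hp : ∀ j, 0 ≤ p j) {x : ℝ} (hx : IsBestResponse Pmax (sinr h h0 n α pstar P0) p i x) :
    pstar i ≤ x :=
  hx.le_of_forall_lt hsP fun _ hq hqs => sinr_update_lt_of_lt_pstar hhi hh0 hn hα0 hP0 hp hq hqs

lemma eq_pstar_of_isBestResponse (hhi : ∀ j, 0 < h i j) (hh0 : 0 < h0 i) (hn : 0 < n i)
    (hα0 : ∀ j, 0 ≤ α j) (hP0 : 0 ≤ P0) (hp1 : 0 < pstar i) {Pmax : Fin N → ℝ}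
    (hsP : pstar i ≤ Pmax i) (hp : ∀ j, 0 ≤ p j) (hlo : ∀ j, pstar j ≤ p j)
    (hup : ∀ j, p j ≤ Pmax j)
    (hαi : pstar i < Pmax i →
      (1 / pstar i) * ∑ j ∈ univ.erase i, α j * (Pmax j - pstar j)
        + (∑ j ∈ univ.erase i, h i j * Pmax j + n i) / (pstar i * h0 i) < α i)
    (hP0i : pstar i < Pmax i →
      (Pmax i / pstar i) * ∑ j ∈ univ.erase i, α j * (Pmax j - pstar j)
        + (Pmax i - pstar i) * (∑ j ∈ univ.erase i, h i j * Pmax j + n i) /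
          (pstar i * h0 i) < P0)
    {x : ℝ} (hx : IsBestResponse Pmax (sinr h h0 n α pstar P0) p i x) :
    x = pstar i := by
  refine hx.eq_of_forall_lt hp1.le hsP fun q hq hqP hqs => ?_
  rcases hqs.lt_or_gt with hqs | hqs
  · exact sinr_update_lt_of_lt_pstar hhi hh0 hn hα0 hP0 hp hq hqs
  · have hsP' := hqs.trans_le hqP
    exact sinr_update_lt_of_pstar_lt hhi hh0 hn hα0 hp1 hp hlo hup (hαi hsP') (hP0i hsP') hqs hqP

end Game

theorem stmt8_general (N : ℕ) (h : Fin N → Fin N → ℝ) (h0 n Pmax pstar α : Fin N → ℝ)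
    (P0 : ℝ)
    (hh : ∀ i j, 0 < h i j) (hh0 : ∀ i, 0 < h0 i) (hn : ∀ i, 0 < n i)
    (hp1 : ∀ i, 0 < pstar i) (hp2 : ∀ i, pstar i ≤ Pmax i)
    (hα0 : ∀ i, 0 ≤ α i) (hP0 : 0 < P0)
    (hα : ∀ i : Fin N, pstar i < Pmax i →
      (1 / pstar i) * ∑ j ∈ univ.erase i, α j * (Pmax j - pstar j)
        + (∑ j ∈ univ.erase i, h i j * Pmax j + n i) / (pstar i * h0 i) < α i)
    (hP0c : ∀ i : Fin N, pstar i < Pmax i →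
      (Pmax i / pstar i) * ∑ j ∈ univ.erase i, α j * (Pmax j - pstar j)
        + (Pmax i - pstar i) * (∑ j ∈ univ.erase i, h i j * Pmax j + n i) /
          (pstar i * h0 i) < P0)
    -- best-response dynamics
    (p : ℕ → Fin N → ℝ)
    (hbox0 : ∀ i, 0 ≤ p 0 i ∧ p 0 i ≤ Pmax i)
    (hBR : ∀ t : ℕ, ∀ i : Fin N,
      0 ≤ p (t + 1) i ∧ p (t + 1) i ≤ Pmax i ∧
      ∀ q, 0 ≤ q → q ≤ Pmax i →
        sinr h h0 n α pstar P0 i (Function.update (p t) i q) ≤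
        sinr h h0 n α pstar P0 i (Function.update (p t) i (p (t + 1) i))) :
    p 2 = pstar ∧ ((∀ i, pstar i ≤ p 0 i) → p 1 = pstar) := by
  have hbox : ∀ t i, 0 ≤ p t i ∧ p t i ≤ Pmax i := by
    rintro (_ | t) i
    exacts [hbox0 i, ⟨(hBR t i).1, (hBR t i).2.1⟩]
  have hge (t : ℕ) (i : Fin N) : pstar i ≤ p (t + 1) i :=
    pstar_le_of_isBestResponse (hh i) (hh0 i) (hn i) hα0 hP0.le (hp2 i) (fun j => (hbox t j).1)
      (hBR t i)
  have heq (t : ℕ) (hlo : ∀ i, pstar i ≤ p t i) : p (t + 1) = pstar :=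
    funext fun i => eq_pstar_of_isBestResponse (hh i) (hh0 i) (hn i) hα0 hP0.le (hp1 i) (hp2 i)
      (fun j => (hbox t j).1) hlo (fun j => (hbox t j).2) (hα i) (hP0c i) (hBR t i)
  exact ⟨heq 1 (hge 0), heq 0⟩

/-- Theorem 3, convergence part: under the hypotheses of Theorem 3, the
best-response dynamics starting from any feasible initial profile reaches `p*` in
at most two steps, and in one step if the initial profile lies in
`∏_i [p_i*, P_i]`. -/
theorem stmt8 (N : ℕ) (h : Fin N → Fin N → ℝ) (h0 n Pmax pstar α : Fin N → ℝ)
    (P0 : ℝ)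
    (hh : ∀ i j, 0 < h i j) (hh0 : ∀ i, 0 < h0 i) (hn : ∀ i, 0 < n i)
    (hP : ∀ i, 0 < Pmax i) (hp1 : ∀ i, 0 < pstar i) (hp2 : ∀ i, pstar i ≤ Pmax i)
    (hα0 : ∀ i, 0 ≤ α i) (hP0 : 0 < P0)
    (hsum : ∑ i, (Pmax i - pstar i) / Pmax i < 1)
    (hα : ∀ i : Fin N, pstar i < Pmax i →
      (1 / pstar i) * ∑ j ∈ univ.erase i, α j * (Pmax j - pstar j)
        + (∑ j ∈ univ.erase i, h i j * Pmax j + n i) / (pstar i * h0 i) < α i)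
    (hP0c : ∀ i : Fin N, pstar i < Pmax i →
      (Pmax i / pstar i) * ∑ j ∈ univ.erase i, α j * (Pmax j - pstar j)
        + (Pmax i - pstar i) * (∑ j ∈ univ.erase i, h i j * Pmax j + n i) /
          (pstar i * h0 i) < P0)
    -- best-response dynamics
    (p : ℕ → Fin N → ℝ)
    (hbox0 : ∀ i, 0 ≤ p 0 i ∧ p 0 i ≤ Pmax i)
    (hBR : ∀ t : ℕ, ∀ i : Fin N,
      0 ≤ p (t + 1) i ∧ p (t + 1) i ≤ Pmax i ∧
      ∀ q, 0 ≤ q → q ≤ Pmax i →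
        sinr h h0 n α pstar P0 i (Function.update (p t) i q) ≤
        sinr h h0 n α pstar P0 i (Function.update (p t) i (p (t + 1) i))) :
    p 2 = pstar ∧ ((∀ i, pstar i ≤ p 0 i) → p 1 = pstar) :=
  stmt8_general N h h0 n Pmax pstar α P0 hh hh0 hn hp1 hp2 hα0 hP0 hα hP0c p hbox0 hBR
end

section
/- For any target p*, the three power-budget quantities satisfy PB_1(p*) ≤ \overline{PB}_1^s(p*) ≤ \widetilde{PB}_1^s(p*), where PB_1(p*) = max_i (P_i - p_i*)(Σ_{j≠i} h_ij p_j* + n_i)/(p_i* h_{i0}), \overline{PB}_1^s(p*) = Σ_{i=1}^N (∏_{j<i} P_j/p_j*) (P_i - p_i*)(Σ_{j<i} h_ij p_j* + Σ_{j>i} h_ij P_j + n_i)/(p_i* h_{i0}), and \widetilde{PB}_1^s(p*) = [1 - Σ_i (P_i - p_i*)/P_i]^{-1} Σ_i (P_i - p_i*)(Σ_{j≠i} h_ij P_j + n_i)/(P_i h_{i0}); moreover \overline{PB}_1^s(p*) = PB_1(p*) when at most one user has p_i* < P_i, and the last quantity is finite only when Σ_i (P_i - p_i*)/P_i < 1.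 -/
open Finset

/-!
Termwise, `∏_{j<i} P_j/p_j ≥ 1` and the sequential interference (earlier users at `p*`, later
ones at `P`) lies between the interference at `p*` and at `P`; bounding the maximum by the sum of
nonnegative terms gives `PB₁ ≤ \overline{PB}₁ˢ`. Moving the factor `P_i/p_i*` out of the `i`-th
term of `\overline{PB}₁ˢ` leaves `∏_{j≤i} P_j/p_j*`, and the Weierstrass product inequality
`∏ (1 - a_j) ≥ 1 - ∑ a_j` with `a_j = (P_j - p_j*)/P_j` bounds it by
`(1 - ∑_j (P_j - p_j*)/P_j)⁻¹`. If at most one user is unsaturated, only its term survives in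
either quantity, and for that user the sequential interference is the interference at `p*`.
-/

theorem one_sub_sum_le_prod_one_sub {ι : Type*} (s : Finset ι) {a : ι → ℝ}
    (ha₀ : ∀ i ∈ s, 0 ≤ a i) (ha₁ : ∀ i ∈ s, a i ≤ 1) :
    1 - ∑ i ∈ s, a i ≤ ∏ i ∈ s, (1 - a i) := by
  induction s using Finset.cons_induction with
  | empty => simp
  | cons x s _ ih =>
    rw [sum_cons, prod_cons]
    have ih := ih (fun i hi => ha₀ i (mem_cons_of_mem hi))
      (fun i hi => ha₁ i (mem_cons_of_mem hi))
    have hx₀ := ha₀ x (mem_cons_self x s)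
    have hx₁ := ha₁ x (mem_cons_self x s)
    have hs : 0 ≤ ∑ i ∈ s, a i := sum_nonneg fun i hi => ha₀ i (mem_cons_of_mem hi)
    nlinarith

theorem sum_eq_iSup_of_support_subsingleton {ι : Type*} [Fintype ι] [Nonempty ι] {f : ι → ℝ}
    (hf : ∀ i, 0 ≤ f i) (hsupp : (Function.support f).Subsingleton) :
    ∑ i, f i = ⨆ i, f i := by
  rcases hsupp.eq_empty_or_singleton with hempty | ⟨i₀, hi₀⟩
  · simp [Function.support_eq_empty_iff.1 hempty]
  have hzero : ∀ j, j ≠ i₀ → f j = 0 := fun j hj =>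
    Function.notMem_support.1 (by rw [hi₀]; exact hj)
  rw [sum_eq_single i₀ (fun j _ hj => hzero j hj) (by simp)]
  refine le_antisymm (le_ciSup (Set.finite_range f).bddAbove i₀) (ciSup_le fun j => ?_)
  rcases eq_or_ne j i₀ with rfl | hj
  · rfl
  · rw [hzero j hj]; exact hf i₀

section Budget

variable {ι : Type*} [Fintype ι]

theorem prod_div_le_inv_one_sub_sum {P p : ι → ℝ} (hp : ∀ i, 0 < p i) (hpP : ∀ i, p i ≤ P i)
    (hS : ∑ i, (P i - p i) / P i < 1) (s : Finset ι) :
    ∏ j ∈ s, P j / p j ≤ (1 - ∑ i, (P i - p i) / P i)⁻¹ := by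
  have hP : ∀ i, 0 < P i := fun i => (hp i).trans_le (hpP i)
  have hgap₀ : ∀ i, 0 ≤ (P i - p i) / P i := fun i =>
    div_nonneg (sub_nonneg.2 (hpP i)) (hP i).le
  have hweier : 1 - ∑ i, (P i - p i) / P i ≤ ∏ j ∈ s, p j / P j :=
    calc 1 - ∑ i, (P i - p i) / P i ≤ 1 - ∑ i ∈ s, (P i - p i) / P i :=
          sub_le_sub_left (sum_le_sum_of_subset_of_nonneg (subset_univ s)
            fun i _ _ => hgap₀ i) 1
      _ ≤ ∏ j ∈ s, (1 - (P j - p j) / P j) :=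
          one_sub_sum_le_prod_one_sub s (fun i _ => hgap₀ i)
            fun i _ => div_le_one_of_le₀ (sub_le_self _ (hp i).le) (hP i).le
      _ = ∏ j ∈ s, p j / P j := prod_congr rfl fun j _ => by field_simp [(hP j).ne']; ring
  calc ∏ j ∈ s, P j / p j = (∏ j ∈ s, p j / P j)⁻¹ := by
        rw [← prod_inv_distrib]; simp only [inv_div]
    _ ≤ (1 - ∑ i, (P i - p i) / P i)⁻¹ := inv_anti₀ (sub_pos.2 hS) hweier

variable [LinearOrder ι] (h : ι → ι → ℝ) (h0 n P p : ι → ℝ)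

def interference (x : ι → ℝ) (i : ι) : ℝ := ∑ j ∈ univ.erase i, h i j * x j

def seqInterference (x y : ι → ℝ) (i : ι) : ℝ :=
  ∑ j ∈ univ.filter (fun j => j < i), h i j * x j +
    ∑ j ∈ univ.filter (fun j => i < j), h i j * y j

theorem interference_eq_seqInterference (x : ι → ℝ) (i : ι) :
    interference h x i = seqInterference h x x i := by
  rw [interference, seqInterference, ← sum_filter_add_sum_filter_not _ (fun j => j < i)]
  congr 2 <;> ext j
  · simpa using ne_of_lt
  · simp only [mem_filter, mem_erase, mem_univ, and_true, true_and, not_lt]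
    exact ⟨fun ⟨hne, hle⟩ => lt_of_le_of_ne hle hne.symm, fun hlt => ⟨hlt.ne', hlt.le⟩⟩

/- The `i`-th terms of `PB₁(p)`, `\overline{PB}₁ˢ(p)` and of the sum in `\widetilde{PB}₁ˢ(p)`;
`seqInterference h p P i` is the interference seen by user `i` when the users before it
transmit at `p` and those after it at `P`. -/
noncomputable def budgetTerm (i : ι) : ℝ := (P i - p i) * (interference h p i + n i) / (p i * h0 i)

noncomputable def seqBudgetTerm (i : ι) : ℝ :=
  (∏ j ∈ univ.filter (fun j => j < i), P j / p j) *
    ((P i - p i) * (seqInterference h p P i + n i) / (p i * h0 i))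

noncomputable def relaxedBudgetTerm (i : ι) : ℝ :=
  (P i - p i) * (interference h P i + n i) / (P i * h0 i)

variable {h h0 n P p}

theorem seqInterference_nonneg {x y : ι → ℝ} {i : ι} (hh : ∀ j, 0 ≤ h i j)
    (hx : ∀ j, 0 ≤ x j) (hy : ∀ j, 0 ≤ y j) : 0 ≤ seqInterference h x y i :=
  add_nonneg (sum_nonneg fun j _ => mul_nonneg (hh j) (hx j))
    (sum_nonneg fun j _ => mul_nonneg (hh j) (hy j))

theorem seqInterference_mono {x x' y y' : ι → ℝ} {i : ι} (hh : ∀ j, 0 ≤ h i j)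
    (hx : ∀ j, x j ≤ x' j) (hy : ∀ j, y j ≤ y' j) :
    seqInterference h x y i ≤ seqInterference h x' y' i :=
  add_le_add (sum_le_sum fun j _ => mul_le_mul_of_nonneg_left (hx j) (hh j))
    (sum_le_sum fun j _ => mul_le_mul_of_nonneg_left (hy j) (hh j))

theorem sub_mul_seqInterference_add_nonneg (hh : ∀ i j, 0 ≤ h i j) (hn : ∀ i, 0 ≤ n i)
    (hp : ∀ i, 0 < p i) (hpP : ∀ i, p i ≤ P i) (i : ι) :
    0 ≤ (P i - p i) * (seqInterference h p P i + n i) :=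
  mul_nonneg (sub_nonneg.2 (hpP i)) (add_nonneg (seqInterference_nonneg (hh i)
    (fun j => (hp j).le) fun j => (hp j).le.trans (hpP j)) (hn i))

theorem budgetTerm_nonneg (hh : ∀ i j, 0 ≤ h i j) (hh0 : ∀ i, 0 ≤ h0 i) (hn : ∀ i, 0 ≤ n i)
    (hp : ∀ i, 0 < p i) (hpP : ∀ i, p i ≤ P i) (i : ι) : 0 ≤ budgetTerm h h0 n P p i :=
  div_nonneg (mul_nonneg (sub_nonneg.2 (hpP i))
    (add_nonneg (sum_nonneg fun j _ => mul_nonneg (hh i j) (hp j).le) (hn i)))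
    (mul_nonneg (hp i).le (hh0 i))

theorem budgetTerm_le_seqBudgetTerm (hh : ∀ i j, 0 ≤ h i j) (hh0 : ∀ i, 0 ≤ h0 i)
    (hn : ∀ i, 0 ≤ n i) (hp : ∀ i, 0 < p i) (hpP : ∀ i, p i ≤ P i) (i : ι) :
    budgetTerm h h0 n P p i ≤ seqBudgetTerm h h0 n P p i := by
  have hI : interference h p i ≤ seqInterference h p P i := by
    rw [interference_eq_seqInterference]
    exact seqInterference_mono (hh i) (fun _ => le_rfl) hpP
  have hprod : 1 ≤ ∏ j ∈ univ.filter (fun j => j < i), P j / p j :=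
    one_le_prod fun j _ => (one_le_div (hp j)).2 (hpP j)
  calc budgetTerm h h0 n P p i
      ≤ (P i - p i) * (seqInterference h p P i + n i) / (p i * h0 i) := by
        unfold budgetTerm
        gcongr
        exacts [mul_nonneg (hp i).le (hh0 i), sub_nonneg.2 (hpP i)]
    _ ≤ seqBudgetTerm h h0 n P p i :=
        le_mul_of_one_le_left (div_nonneg (sub_mul_seqInterference_add_nonneg hh hn hp hpP i)
          (mul_nonneg (hp i).le (hh0 i))) hprod

theorem seqBudgetTerm_nonneg (hh : ∀ i j, 0 ≤ h i j) (hh0 : ∀ i, 0 ≤ h0 i) (hn : ∀ i, 0 ≤ n i)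
    (hp : ∀ i, 0 < p i) (hpP : ∀ i, p i ≤ P i) (i : ι) : 0 ≤ seqBudgetTerm h h0 n P p i :=
  (budgetTerm_nonneg hh hh0 hn hp hpP i).trans (budgetTerm_le_seqBudgetTerm hh hh0 hn hp hpP i)

theorem seqBudgetTerm_le_relaxedBudgetTerm (hh : ∀ i j, 0 ≤ h i j) (hh0 : ∀ i, 0 ≤ h0 i)
    (hn : ∀ i, 0 ≤ n i) (hp : ∀ i, 0 < p i) (hpP : ∀ i, p i ≤ P i)
    (hS : ∑ i, (P i - p i) / P i < 1) (i : ι) :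
    seqBudgetTerm h h0 n P p i ≤
      (1 - ∑ i, (P i - p i) / P i)⁻¹ * relaxedBudgetTerm h h0 n P p i := by
  have hP : 0 < P i := (hp i).trans_le (hpP i)
  have hprod : (∏ j ∈ univ.filter (fun j => j < i), P j / p j) * (P i / p i) ≤
      (1 - ∑ i, (P i - p i) / P i)⁻¹ := by
    have := prod_div_le_inv_one_sub_sum hp hpP hS (insert i (univ.filter (fun j => j < i)))
    rwa [prod_insert (by simp), mul_comm] at this
  have hI : seqInterference h p P i ≤ interference h P i := by
    rw [interference_eq_seqInterference]
    exact seqInterference_mono (hh i) hpP (fun _ => le_rfl)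
  have hX := sub_mul_seqInterference_add_nonneg hh hn hp hpP i
  calc seqBudgetTerm h h0 n P p i
      = (∏ j ∈ univ.filter (fun j => j < i), P j / p j) * (P i / p i) *
          ((P i - p i) * (seqInterference h p P i + n i) / (P i * h0 i)) := by
        rw [seqBudgetTerm, mul_assoc, div_mul_div_comm, mul_left_comm (p i),
          mul_div_mul_left _ _ hP.ne']
    _ ≤ (1 - ∑ i, (P i - p i) / P i)⁻¹ * relaxedBudgetTerm h h0 n P p i := by
        unfold relaxedBudgetTerm
        gcongr
        exacts [div_nonneg hX (mul_nonneg hP.le (hh0 i)), mul_nonneg hP.le (hh0 i),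
          sub_nonneg.2 (hpP i)]

theorem seqBudgetTerm_eq_budgetTerm (hp : ∀ i, 0 < p i) {i : ι}
    (hsat : ∀ j, j ≠ i → p j = P j) : seqBudgetTerm h h0 n P p i = budgetTerm h h0 n P p i := by
  have hprod : ∏ j ∈ univ.filter (fun j => j < i), P j / p j = 1 :=
    prod_eq_one fun j hj => by rw [← hsat j (mem_filter.1 hj).2.ne, div_self (hp j).ne']
  have hI : seqInterference h p P i = interference h p i := by
    rw [interference_eq_seqInterference, seqInterference, seqInterference]
    congr 1
    exact sum_congr rfl fun j hj => by rw [hsat j (mem_filter.1 hj).2.ne']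
  rw [seqBudgetTerm, budgetTerm, hprod, hI, one_mul]

theorem seqBudgetTerm_eq_budgetTerm_of_subsingleton (hp : ∀ i, 0 < p i)
    (hpP : ∀ i, p i ≤ P i) (hsub : {i | p i < P i}.Subsingleton) :
    seqBudgetTerm h h0 n P p = budgetTerm h h0 n P p := by
  funext i
  rcases (hpP i).lt_or_eq with hlt | heq
  · exact seqBudgetTerm_eq_budgetTerm hp fun j hj =>
      (hpP j).lt_or_eq.resolve_left fun hltj => hj (hsub hltj hlt)
  · simp [seqBudgetTerm, budgetTerm, heq]

theorem iSup_budgetTerm_le_sum_seqBudgetTerm [Nonempty ι] (hh : ∀ i j, 0 ≤ h i j)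
    (hh0 : ∀ i, 0 ≤ h0 i) (hn : ∀ i, 0 ≤ n i) (hp : ∀ i, 0 < p i) (hpP : ∀ i, p i ≤ P i) :
    ⨆ i, budgetTerm h h0 n P p i ≤ ∑ i, seqBudgetTerm h h0 n P p i :=
  ciSup_le fun i => (budgetTerm_le_seqBudgetTerm hh hh0 hn hp hpP i).trans
    (single_le_sum (fun j _ => seqBudgetTerm_nonneg hh hh0 hn hp hpP j) (mem_univ i))

theorem sum_seqBudgetTerm_le (hh : ∀ i j, 0 ≤ h i j) (hh0 : ∀ i, 0 ≤ h0 i)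
    (hn : ∀ i, 0 ≤ n i) (hp : ∀ i, 0 < p i) (hpP : ∀ i, p i ≤ P i)
    (hS : ∑ i, (P i - p i) / P i < 1) :
    ∑ i, seqBudgetTerm h h0 n P p i ≤
      (1 - ∑ i, (P i - p i) / P i)⁻¹ * ∑ i, relaxedBudgetTerm h h0 n P p i := by
  rw [mul_sum]
  exact sum_le_sum fun i _ => seqBudgetTerm_le_relaxedBudgetTerm hh hh0 hn hp hpP hS i

theorem sum_seqBudgetTerm_eq_iSup_budgetTerm [Nonempty ι] (hh : ∀ i j, 0 ≤ h i j)
    (hh0 : ∀ i, 0 ≤ h0 i) (hn : ∀ i, 0 ≤ n i) (hp : ∀ i, 0 < p i) (hpP : ∀ i, p i ≤ P i)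
    (hsub : {i | p i < P i}.Subsingleton) :
    ∑ i, seqBudgetTerm h h0 n P p i = ⨆ i, budgetTerm h h0 n P p i := by
  rw [seqBudgetTerm_eq_budgetTerm_of_subsingleton hp hpP hsub]
  refine sum_eq_iSup_of_support_subsingleton (budgetTerm_nonneg hh hh0 hn hp hpP)
    (hsub.anti fun i hi => (hpP i).lt_of_ne fun heq => hi ?_)
  simp [budgetTerm, heq]

end Budget

theorem stmt10_general (N N' : ℕ) (hN : 0 < N) (h : Fin N → Fin N → ℝ)
    (h0 n Pmax pstar : Fin N → ℝ)
    (hh : ∀ i j, 0 < h i j) (hh0 : ∀ i, 0 < h0 i) (hn : ∀ i, 0 < n i)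
    (hp1 : ∀ i, 0 < pstar i) (hp2 : ∀ i, pstar i ≤ Pmax i)
    (hord : ∀ i : Fin N, pstar i < Pmax i ↔ (i : ℕ) < N')
    (hsum : ∑ i, (Pmax i - pstar i) / Pmax i < 1)
    (PB1 PBbar PBtilde : ℝ)
    (hPB1 : PB1 = ⨆ i : Fin N,
      (Pmax i - pstar i) * (∑ j ∈ univ.erase i, h i j * pstar j + n i) /
        (pstar i * h0 i))
    (hPBbar : PBbar = ∑ i,
      (∏ j ∈ univ.filter (fun j => j < i), Pmax j / pstar j) *
        ((Pmax i - pstar i) * (∑ j ∈ univ.filter (fun j => j < i), h i j * pstar j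
          + ∑ j ∈ univ.filter (fun j => i < j), h i j * Pmax j + n i) /
          (pstar i * h0 i)))
    (hPBtilde : PBtilde = (1 - ∑ i, (Pmax i - pstar i) / Pmax i)⁻¹ *
      ∑ i, (Pmax i - pstar i) * (∑ j ∈ univ.erase i, h i j * Pmax j + n i) /
        (Pmax i * h0 i)) :
    PB1 ≤ PBbar ∧ PBbar ≤ PBtilde ∧ (N' ≤ 1 → PBbar = PB1) := by
  have : Nonempty (Fin N) := ⟨⟨0, hN⟩⟩
  replace hh : ∀ i j, 0 ≤ h i j := fun i j => (hh i j).le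
  replace hh0 : ∀ i, 0 ≤ h0 i := fun i => (hh0 i).le
  replace hn : ∀ i, 0 ≤ n i := fun i => (hn i).le
  subst hPB1 hPBbar hPBtilde
  refine ⟨iSup_budgetTerm_le_sum_seqBudgetTerm hh hh0 hn hp1 hp2,
    sum_seqBudgetTerm_le hh hh0 hn hp1 hp2 hsum, fun hN' => ?_⟩
  refine sum_seqBudgetTerm_eq_iSup_budgetTerm hh hh0 hn hp1 hp2 fun i hi j hj => ?_
  have := (hord i).1 hi
  have := (hord j).1 hj
  exact Fin.ext (by omega)

/-- Comparison of the power-budget quantities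
`PB₁(p*) ≤ \overline{PB}₁ˢ(p*) ≤ \widetilde{PB}₁ˢ(p*)` (the last under
`∑_i (P_i - p_i*)/P_i < 1`), with equality of the first two when at most one user
has `p_i* < P_i`. Users are ordered so that `p_i* < P_i` iff `i < N'`. -/
theorem stmt10 (N N' : ℕ) (hN : 0 < N) (h : Fin N → Fin N → ℝ)
    (h0 n Pmax pstar : Fin N → ℝ)
    (hh : ∀ i j, 0 < h i j) (hh0 : ∀ i, 0 < h0 i) (hn : ∀ i, 0 < n i)
    (hP : ∀ i, 0 < Pmax i) (hp1 : ∀ i, 0 < pstar i) (hp2 : ∀ i, pstar i ≤ Pmax i)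
    (hord : ∀ i : Fin N, pstar i < Pmax i ↔ (i : ℕ) < N')
    (hsum : ∑ i, (Pmax i - pstar i) / Pmax i < 1)
    (PB1 PBbar PBtilde : ℝ)
    (hPB1 : PB1 = ⨆ i : Fin N,
      (Pmax i - pstar i) * (∑ j ∈ univ.erase i, h i j * pstar j + n i) /
        (pstar i * h0 i))
    (hPBbar : PBbar = ∑ i,
      (∏ j ∈ univ.filter (fun j => j < i), Pmax j / pstar j) *
        ((Pmax i - pstar i) * (∑ j ∈ univ.filter (fun j => j < i), h i j * pstar j
          + ∑ j ∈ univ.filter (fun j => i < j), h i j * Pmax j + n i) /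
          (pstar i * h0 i)))
    (hPBtilde : PBtilde = (1 - ∑ i, (Pmax i - pstar i) / Pmax i)⁻¹ *
      ∑ i, (Pmax i - pstar i) * (∑ j ∈ univ.erase i, h i j * Pmax j + n i) /
        (Pmax i * h0 i)) :
    PB1 ≤ PBbar ∧ PBbar ≤ PBtilde ∧ (N' ≤ 1 → PBbar = PB1) :=
  stmt10_general N N' hN h h0 n Pmax pstar hh hh0 hn hp1 hp2 hord hsum PB1 PBbar PBtilde hPB1 hPBbar
    hPBtilde
end

section
/- (Theorem 6, 'if' direction) Consider the aggregate-power intervention rule f(p) = [α_0 |Σ_i h_{0i} p_i − p_A*|]_0^{P_0} with p_A* = Σ_i h_{0i} p_i*. If α_0 ≥ max_{i: p_i*<P_i} (Σ_{j≠i} h_ij p_j* + n_i)/(h_{0i} p_i* h_{i0}) and P_0 ≥ max_{i: p_i*<P_i} (P_i − p_i*)(Σ_{j≠i} h_ij p_j* + n_i)/(p_i* h_{i0}), then p* is a Nash equilibrium of the induced game. -/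
/-!
Fix a user `i` and a unilateral deviation `q` from `p*`. At `p*` the intervention is idle, so
user `i` sees interference `S = ∑_{j ≠ i} h_ij p_j* + n_i`; after deviating it additionally sees
`h_{i0} f`, with `f = min (α₀ g_i |q − p_i*|) P₀`. Its SINR does not increase as long as
`(q − p_i*) S ≤ p_i* h_{i0} f`. This is trivial for `q ≤ p_i*`; for `q > p_i*` (possible only
when `p_i* < P_i`) the bound on `α₀` handles the linear branch of the minimum, and the bound on
`P₀`, together with `q − p_i* ≤ P_i − p_i*`, handles the saturated one.
-/

open Finset

/-- First-order intervention rule based on aggregate receive power: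
`f(p) = [α₀ |∑ i, g_i p_i − p_A*|]₀^{P₀}` with `p_A* = ∑ i, g_i p_i*`,
where `g i = h_{0i}` is the gain from user `i` to the intervention device's
receiver (the expression inside is nonnegative, so the lower truncation is
inactive). -/
noncomputable def intvA {N : ℕ} (α0 : ℝ) (g pstar : Fin N → ℝ) (P0 : ℝ)
    (p : Fin N → ℝ) : ℝ :=
  min (α0 * |∑ i, g i * p i - ∑ i, g i * pstar i|) P0

/-- SINR of user `i` under the aggregate-power intervention rule. -/
noncomputable def sinrA {N : ℕ} (h : Fin N → Fin N → ℝ) (h0 n g : Fin N → ℝ)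
    (α0 : ℝ) (pstar : Fin N → ℝ) (P0 : ℝ) (i : Fin N) (p : Fin N → ℝ) : ℝ :=
  h i i * p i /
    (h0 i * intvA α0 g pstar P0 p + ∑ j ∈ univ.erase i, h i j * p j + n i)

open Function

theorem Finset.sum_mul_update_sub_sum_mul {ι R : Type*} [Fintype ι] [DecidableEq ι] [CommRing R]
    (g p : ι → R) (i : ι) (q : R) :
    ∑ j, g j * update p i q j - ∑ j, g j * p j = g i * (q - p i) := by
  rw [← sum_sub_distrib, sum_eq_single i]
  · simp [mul_sub]
  · intro j _ hj
    simp [update_of_ne hj]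
  · simp

theorem Finset.sum_erase_mul_update_self {ι M : Type*} [DecidableEq ι]
    [NonUnitalNonAssocSemiring M]
    (s : Finset ι) (h p : ι → M) (i : ι) (q : M) :
    ∑ j ∈ s.erase i, h j * update p i q j = ∑ j ∈ s.erase i, h j * p j :=
  sum_congr rfl fun j hj => by rw [update_of_ne (ne_of_mem_erase hj)]

theorem mul_div_add_le_mul_div_of_sub_mul_le {a p q S T : ℝ} (ha : 0 ≤ a) (hS : 0 < S)
    (hT : 0 ≤ T) (hpq : (q - p) * S ≤ p * T) :
    a * q / (T + S) ≤ a * p / S := by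
  rw [div_le_div_iff₀ (by linarith) hS]
  nlinarith [mul_le_mul_of_nonneg_left hpq ha]

theorem sub_mul_le_mul_min_of_bounds {S p c g α0 P0 Pmax q : ℝ} (hS : 0 ≤ S) (hp : 0 < p)
    (hc : 0 < c) (hg : 0 < g) (hα0 : 0 ≤ α0) (hP0 : 0 ≤ P0) (hq : q ≤ Pmax)
    (hα : p < Pmax → S / (g * p * c) ≤ α0) (hP0c : p < Pmax → (Pmax - p) * S / (p * c) ≤ P0) :
    (q - p) * S ≤ p * (c * min (α0 * |g * (q - p)|) P0) := by
  rcases le_or_gt q p with hqp | hpq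
  · have : 0 ≤ p * (c * min (α0 * |g * (q - p)|) P0) :=
      mul_nonneg hp.le (mul_nonneg hc.le (le_min (mul_nonneg hα0 (abs_nonneg _)) hP0))
    nlinarith
  have hpP : p < Pmax := hpq.trans_le hq
  have hα' : S ≤ α0 * (g * p * c) := (div_le_iff₀ (by positivity)).mp (hα hpP)
  have hP0' : (Pmax - p) * S ≤ P0 * (p * c) := (div_le_iff₀ (by positivity)).mp (hP0c hpP)
  rw [abs_of_pos (mul_pos hg (sub_pos.mpr hpq)), ← mul_assoc,
    mul_min_of_nonneg _ _ (by positivity)]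
  refine le_min ?_ ?_
  · nlinarith [mul_le_mul_of_nonneg_left hα' (sub_pos.mpr hpq).le]
  · nlinarith [mul_le_mul_of_nonneg_right (sub_le_sub_right hq p) hS]

section

variable {N : ℕ} {h : Fin N → Fin N → ℝ} {h0 n g : Fin N → ℝ} {α0 : ℝ} {pstar : Fin N → ℝ}
  {P0 : ℝ} {i : Fin N}

theorem intvA_self (hP0 : 0 ≤ P0) : intvA α0 g pstar P0 pstar = 0 := by
  simp [intvA, hP0]

theorem intvA_update_self (q : ℝ) :
    intvA α0 g pstar P0 (update pstar i q) = min (α0 * |g i * (q - pstar i)|) P0 := by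
  rw [intvA, sum_mul_update_sub_sum_mul]

theorem sinrA_self (hP0 : 0 ≤ P0) :
    sinrA h h0 n g α0 pstar P0 i pstar
      = h i i * pstar i / (∑ j ∈ univ.erase i, h i j * pstar j + n i) := by
  rw [sinrA, intvA_self hP0, mul_zero, zero_add]

theorem sinrA_update_self (q : ℝ) :
    sinrA h h0 n g α0 pstar P0 i (update pstar i q)
      = h i i * q / (h0 i * min (α0 * |g i * (q - pstar i)|) P0
          + (∑ j ∈ univ.erase i, h i j * pstar j + n i)) := by
  rw [sinrA, intvA_update_self, update_self, sum_erase_mul_update_self, add_assoc]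

end

theorem stmt14_general (N : ℕ) (h : Fin N → Fin N → ℝ) (h0 n g Pmax pstar : Fin N → ℝ)
    (α0 P0 : ℝ)
    (hh : ∀ i j, 0 < h i j) (hh0 : ∀ i, 0 < h0 i) (hg : ∀ i, 0 < g i)
    (hn : ∀ i, 0 < n i)
    (hp1 : ∀ i, 0 < pstar i)
    (hα0 : 0 ≤ α0) (hP0 : 0 < P0)
    (hα : ∀ i, pstar i < Pmax i →
      (∑ j ∈ univ.erase i, h i j * pstar j + n i) / (g i * pstar i * h0 i) ≤ α0)
    (hP0c : ∀ i, pstar i < Pmax i →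
      (Pmax i - pstar i) * (∑ j ∈ univ.erase i, h i j * pstar j + n i) /
        (pstar i * h0 i) ≤ P0) :
    isNE Pmax (sinrA h h0 n g α0 pstar P0) pstar := by
  intro i q _ hq
  have hS : 0 < ∑ j ∈ univ.erase i, h i j * pstar j + n i :=
    add_pos_of_nonneg_of_pos
      (sum_nonneg fun j _ => mul_nonneg (hh i j).le (hp1 j).le) (hn i)
  have hF : 0 ≤ h0 i * min (α0 * |g i * (q - pstar i)|) P0 :=
    mul_nonneg (hh0 i).le (le_min (mul_nonneg hα0 (abs_nonneg _)) hP0.le)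
  rw [sinrA_update_self, sinrA_self hP0.le]
  exact mul_div_add_le_mul_div_of_sub_mul_le (hh i i).le hS hF <|
    sub_mul_le_mul_min_of_bounds hS.le (hp1 i) (hh0 i) (hg i) hα0 hP0.le hq (hα i) (hP0c i)

/-- Theorem 6, 'if' direction: the stated lower bounds on the aggregate
intervention rate `α₀` and the capability `P₀` imply that the target `p*` is a
Nash equilibrium under the aggregate-power intervention rule. -/
theorem stmt14 (N : ℕ) (h : Fin N → Fin N → ℝ) (h0 n g Pmax pstar : Fin N → ℝ)
    (α0 P0 : ℝ)
    (hh : ∀ i j, 0 < h i j) (hh0 : ∀ i, 0 < h0 i) (hg : ∀ i, 0 < g i)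
    (hn : ∀ i, 0 < n i)
    (hP : ∀ i, 0 < Pmax i) (hp1 : ∀ i, 0 < pstar i) (hp2 : ∀ i, pstar i ≤ Pmax i)
    (hα0 : 0 ≤ α0) (hP0 : 0 < P0)
    (hα : ∀ i, pstar i < Pmax i →
      (∑ j ∈ univ.erase i, h i j * pstar j + n i) / (g i * pstar i * h0 i) ≤ α0)
    (hP0c : ∀ i, pstar i < Pmax i →
      (Pmax i - pstar i) * (∑ j ∈ univ.erase i, h i j * pstar j + n i) /
        (pstar i * h0 i) ≤ P0) :
    isNE Pmax (sinrA h h0 n g α0 pstar P0) pstar :=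
  stmt14_general N h h0 n g Pmax pstar α0 P0 hh hh0 hg hn hp1 hα0 hP0 hα hP0c
end

section
/- Under a first-order intervention rule based on individual powers with sufficiently large intervention rates (α_i strictly exceeding the threshold (Σ_{j≠i} h_ij p_j,{-i} + n_i)/(p_i* h_{i0}) computed at the opponents' profile), the best response of user i to any fixed opponent profile p_{-i} is attained either at p_i = p_i* or at p_i = P_i, because user i's SINR as a function of its own power p_i is piecewise monotone: increasing on [0, p_i*], and on [p_i*, P_i] it is the ratio of a linear function to a piecewise-linear function whose maximum over the interval is attained at an endpoint. -/
/-!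
The intervention term `α |q − p*|` is smallest at `q = p*`, so on `[0, p*]` the payoff is at most
its value at `p*`. On `[p*, P₁]` the denominator `D` is a positive minimum of affine functions,
hence concave, so `q ↦ q / D q` is quasiconvex: for `r ≥ 0` its sublevel set `{q ≤ r D q}` is a
sublevel set of the convex function `q − r D q`. A quasiconvex function on a segment is bounded by
its values at the endpoints.
-/

open Set Convex

theorem QuasiconvexOn.le_on_segment {𝕜 E β : Type*} [Semiring 𝕜] [PartialOrder 𝕜]
    [AddCommMonoid E] [LinearOrder β] [SMul 𝕜 E] {s : Set E} {f : E → β}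
    (hf : QuasiconvexOn 𝕜 s f) {x y z : E} (hx : x ∈ s) (hy : y ∈ s)
    (hz : z ∈ [x -[𝕜] y]) : f z ≤ max (f x) (f y) := by
  obtain ⟨a, b, ha, hb, hab, rfl⟩ := hz
  exact (quasiconvexOn_iff_le_max.1 hf).2 hx hy ha hb hab

theorem ConvexOn.quasiconvexOn_div {𝕜 E : Type*} [Field 𝕜] [LinearOrder 𝕜]
    [IsStrictOrderedRing 𝕜] [AddCommMonoid E] [Module 𝕜 E] {s : Set E} {f g : E → 𝕜}
    (hf : ConvexOn 𝕜 s f) (hg : ConcaveOn 𝕜 s g) (hf0 : ∀ x ∈ s, 0 ≤ f x)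
    (hg0 : ∀ x ∈ s, 0 < g x) : QuasiconvexOn 𝕜 s fun x => f x / g x := by
  intro r
  rcases lt_or_ge r 0 with hr | hr
  · convert convex_empty (𝕜 := 𝕜) (E := E)
    refine eq_empty_of_forall_notMem fun x ⟨hx, hxr⟩ => ?_
    exact (hr.trans_le (div_nonneg (hf0 x hx) (hg0 x hx).le)).not_ge hxr
  · have hsub : {x ∈ s | f x / g x ≤ r} = {x ∈ s | (f - r • g) x ≤ 0} := by
      refine sep_ext_iff.2 fun x hx => ?_
      rw [Pi.sub_apply, Pi.smul_apply, smul_eq_mul, sub_nonpos, div_le_iff₀ (hg0 x hx), mul_comm]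
    rw [hsub]
    exact (hf.sub (hg.smul hr)).convex_le 0

section Intervention

variable (hi0 pstar P0 α c I n : ℝ)

def sinrDenom (q : ℝ) : ℝ := hi0 * min (α * |q - pstar| + c) P0 + I + n

variable {hi0 pstar P0 α c I n}

theorem sinrDenom_pos (hhi0 : 0 ≤ hi0) (hP0 : 0 ≤ P0) (hα : 0 ≤ α) (hc : 0 ≤ c) (hI : 0 ≤ I)
    (hn : 0 < n) (q : ℝ) : 0 < sinrDenom hi0 pstar P0 α c I n q := by
  unfold sinrDenom
  positivity

theorem sinrDenom_pstar_le (hhi0 : 0 ≤ hi0) (hα : 0 ≤ α) (q : ℝ) :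
    sinrDenom hi0 pstar P0 α c I n pstar ≤ sinrDenom hi0 pstar P0 α c I n q := by
  have habs : |pstar - pstar| ≤ |q - pstar| := by simp
  unfold sinrDenom
  gcongr

theorem concaveOn_sinrDenom (hhi0 : 0 ≤ hi0) :
    ConcaveOn ℝ (Ici pstar) (sinrDenom hi0 pstar P0 α c I n) := by
  have haffine : ConcaveOn ℝ (Ici pstar) fun q => α * (q - pstar) + c := by
    refine ⟨convex_Ici _, fun x _ y _ a b _ _ hab => le_of_eq ?_⟩
    simp only [smul_eq_mul]
    linear_combination (c - α * pstar) * hab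
  refine (((haffine.inf (concaveOn_const P0 (convex_Ici _))).smul hhi0).add_const I
    |>.add_const n).congr fun q hq => ?_
  simp [sinrDenom, abs_of_nonneg (sub_nonneg.2 (mem_Ici.1 hq))]

end Intervention

theorem stmt18_general (hii hi0 pstar P1 P0 α c I n : ℝ)
    (hhii : 0 < hii) (hhi0 : 0 < hi0) (hn : 0 < n) (hI : 0 ≤ I) (hc : 0 ≤ c)
    (hp1 : 0 < pstar) (hP0 : 0 < P0) (hα0 : 0 ≤ α) :
    ∀ q, 0 ≤ q → q ≤ P1 →
      hii * q / (hi0 * min (α * |q - pstar| + c) P0 + I + n) ≤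
      max (hii * pstar / (hi0 * min (α * |pstar - pstar| + c) P0 + I + n))
          (hii * P1 / (hi0 * min (α * |P1 - pstar| + c) P0 + I + n)) := by
  intro q hq0 hqP1
  set D := sinrDenom hi0 pstar P0 α c I n
  change hii * q / D q ≤ max (hii * pstar / D pstar) (hii * P1 / D P1)
  have hD : ∀ x, 0 < D x := sinrDenom_pos hhi0.le hP0.le hα0 hc hI hn
  rcases le_total q pstar with hq | hq
  · exact le_max_of_le_left <| div_le_div₀ (by positivity) (by gcongr) (hD pstar)
      (sinrDenom_pstar_le hhi0.le hα0 q)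
  · have hpP1 : pstar ≤ P1 := hq.trans hqP1
    have hquasi : QuasiconvexOn ℝ (Icc pstar P1) fun x => hii * x / D x :=
      ((convexOn_id (convex_Icc _ _)).smul hhii.le).quasiconvexOn_div
        ((concaveOn_sinrDenom hhi0.le).subset Icc_subset_Ici_self (convex_Icc _ _))
        (fun x hx => mul_nonneg hhii.le (hp1.le.trans hx.1)) (fun x _ => hD x)
    exact hquasi.le_on_segment (left_mem_Icc.2 hpP1) (right_mem_Icc.2 hpP1)
      (by rw [segment_eq_Icc hpP1]; exact ⟨hq, hqP1⟩)

/-- Best responses under a first-order intervention rule lie in `{p*, P₁}`: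
fixing the opponents' profile (`I` is the interference `∑_{j≠i} h_ij p_j` and
`c = ∑_{j≠i} α_j |p_j − p_j*| ≥ 0`), if the intervention rate strictly exceeds
`(I + n)/(p* h_i0)`, then user `i`'s payoff at any `q ∈ [0, P₁]` is at most the
larger of its payoffs at `p*` and at `P₁`. -/
theorem stmt18 (hii hi0 pstar P1 P0 α c I n : ℝ)
    (hhii : 0 < hii) (hhi0 : 0 < hi0) (hn : 0 < n) (hI : 0 ≤ I) (hc : 0 ≤ c)
    (hp1 : 0 < pstar) (hp2 : pstar ≤ P1) (hP0 : 0 < P0) (hα0 : 0 ≤ α)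
    (hα : (I + n) / (pstar * hi0) < α) :
    ∀ q, 0 ≤ q → q ≤ P1 →
      hii * q / (hi0 * min (α * |q - pstar| + c) P0 + I + n) ≤
      max (hii * pstar / (hi0 * min (α * |pstar - pstar| + c) P0 + I + n))
          (hii * P1 / (hi0 * min (α * |P1 - pstar| + c) P0 + I + n)) :=
  stmt18_general hii hi0 pstar P1 P0 α c I n hhii hhi0 hn hI hc hp1 hP0 hα0
end
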